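/- arXiv:2004.05387 — 7 statements merged into one kernel-verified Lean document; each statement's English description precedes it below -/
import Mathlib

section
/- Let 0 < p < 1/6, let B be a Bernoulli(p) random variable, and let S be a real random variable with finite fourth moment that is independent of B and satisfies P(S = 0) < 1. Set X = S·B and θ = E[X]. Then E[(X − θ)^4] > 3·(E[(X − θ)^2])^2; that is, X is leptokurtic. -/
open MeasureTheory ProbabilityTheory

private lemma core_ineq (x y t s p : ℝ) (hp0 : 0 < p) (hp1 : p < 1/6) (ht : 0 < t)
    (hts : t^2 ≤ s) (hx0 : 0 ≤ x) (hxt : x ≤ t) (hy0 : 0 ≤ y) (hyts : y ≤ t*s) :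
    s^2 - 4*p*x*y + 12*p^2*t^2*x^2 - 6*p^3*x^4 - 3*p*t^4 > 0 := by
  have hs : 0 < s := lt_of_lt_of_le (by positivity) hts
  have h1 : 4*p*x*y ≤ 4*p*x*(t*s) := by
    nlinarith [mul_nonneg (mul_nonneg hp0.le hx0) (sub_nonneg.2 hyts)]
  have hd : 0 ≤ t - x := sub_nonneg.2 hxt
  have hE : 0 ≤ 4*p*t*s - 12*p^2*t^2*(t+x) + 6*p^3*(t+x)*(x^2+t^2) := by
    have h6p : 6*p*t^2 ≤ s := by nlinarith [sq_nonneg t]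
    have e1 : 0 ≤ 4*p*t*(s - 6*p*t^2) := mul_nonneg (by positivity) (by linarith)
    have e2 : 0 ≤ 12*p^2*t^2*(t-x) := by positivity
    have e3 : 0 ≤ 6*p^3*(t+x)*(x^2+t^2) := by positivity
    nlinarith [e1, e2, e3]
  have h2 : s^2 - 4*p*x*(t*s) + 12*p^2*t^2*x^2 - 6*p^3*x^4 ≥
      s^2 - 4*p*t^2*s + 12*p^2*t^4 - 6*p^3*t^4 := by
    nlinarith [mul_nonneg hd hE]
  have h3 : s^2 - 4*p*t^2*s ≥ t^4 - 4*p*t^4 := by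
    nlinarith [mul_nonneg (sub_nonneg.2 hts) (by nlinarith : (0:ℝ) ≤ s + t^2 - 4*p*t^2)]
  have h4 : (0:ℝ) < 1 - 7*p + 12*p^2 - 6*p^3 := by
    nlinarith [mul_pos (show (0:ℝ) < 1-p by linarith) (show (0:ℝ) < 6*p^2-6*p+1 by nlinarith)]
  nlinarith [mul_pos (pow_pos ht 4) h4]

private lemma cs_integral {Ω : Type*} [MeasurableSpace Ω] (μ : Measure Ω)
    (f g : Ω → ℝ) (hf : Integrable (fun ω => f ω ^ 2) μ)
    (hg : Integrable (fun ω => g ω ^ 2) μ) (hfg : Integrable (fun ω => f ω * g ω) μ) :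
    (∫ ω, f ω * g ω ∂μ)^2 ≤ (∫ ω, f ω ^ 2 ∂μ) * (∫ ω, g ω ^ 2 ∂μ) := by
  set A := ∫ ω, f ω ^ 2 ∂μ with hA
  set B := ∫ ω, f ω * g ω ∂μ with hB
  set C := ∫ ω, g ω ^ 2 ∂μ with hC
  have key : ∀ x : ℝ, 0 ≤ A * (x * x) + (2*B) * x + C := by
    intro x
    have i1 : Integrable (fun ω => x^2 * f ω ^2) μ := hf.const_mul _
    have i2 : Integrable (fun ω => (2*x) * (f ω * g ω)) μ := hfg.const_mul _
    have i12 : Integrable (fun ω => x^2 * f ω ^2 + (2*x) * (f ω * g ω)) μ := i1.add i2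
    have h0 : 0 ≤ ∫ ω, (x^2 * f ω ^2 + (2*x) * (f ω * g ω) + g ω ^2) ∂μ := by
      apply integral_nonneg
      intro ω
      simp only [Pi.zero_apply]
      nlinarith [sq_nonneg (x * f ω + g ω)]
    have heq : ∫ ω, (x^2 * f ω ^2 + (2*x) * (f ω * g ω) + g ω ^2) ∂μ
        = x^2 * A + (2*x) * B + C := by
      rw [integral_add i12 hg, integral_add i1 i2, integral_const_mul, integral_const_mul]
    rw [heq] at h0
    nlinarith [h0]
  have hdis := discrim_le_zero key
  rw [discrim] at hdis
  nlinarith [hdis]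

set_option maxHeartbeats 2000000 in
/-- If `B ~ Bernoulli(p)` with `0 < p < 1/6`, `S` has finite fourth moment, is independent
of `B` and `P(S = 0) < 1`, then `X = S * B` is leptokurtic:
`E[(X - E X)^4] > 3 * (E[(X - E X)^2])^2`. -/
theorem sparsity_implies_leptokurtic
    {Ω : Type*} [MeasurableSpace Ω] (μ : Measure Ω) [IsProbabilityMeasure μ]
    (p : ℝ) (hp0 : 0 < p) (hp1 : p < 1 / 6)
    (B S : Ω → ℝ) (hBmeas : Measurable B) (hSmeas : Measurable S)
    (hBvals : ∀ ω, B ω = 0 ∨ B ω = 1)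
    (hBp : μ {ω | B ω = 1} = ENNReal.ofReal p)
    (hS4 : Integrable (fun ω => (S ω) ^ 4) μ)
    (hindep : IndepFun S B μ)
    (hS0 : μ {ω | S ω = 0} < 1) :
    (∫ ω, (S ω * B ω - ∫ ω', S ω' * B ω' ∂μ) ^ 4 ∂μ) >
      3 * (∫ ω, (S ω * B ω - ∫ ω', S ω' * B ω' ∂μ) ^ 2 ∂μ) ^ 2 := by
  -- pointwise bounds
  have habs : ∀ (k : ℕ), k ≤ 4 → ∀ a : ℝ, |a ^ k| ≤ 1 + a ^ 4 := by
    intro k hk a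
    rcases le_or_gt (|a|) 1 with h | h
    · have h1 : |a ^ k| = |a| ^ k := (pow_abs a k).symm
      have h2 : |a| ^ k ≤ 1 := pow_le_one₀ (abs_nonneg a) h
      have h3 : (0:ℝ) ≤ a ^ 4 := by positivity
      linarith [h1 ▸ h2]
    · have h1 : |a ^ k| = |a| ^ k := (pow_abs a k).symm
      have h2 : |a| ^ k ≤ |a| ^ 4 := pow_le_pow_right₀ h.le hk
      have h3 : |a| ^ 4 = a ^ 4 := by
        rw [← abs_pow, abs_of_nonneg (by positivity)]
      linarith [h1 ▸ h2, h3 ▸ h2]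
  -- integrability of S^k
  have hSk : ∀ (k : ℕ), k ≤ 4 → Integrable (fun ω => S ω ^ k) μ := by
    intro k hk
    refine Integrable.mono' ((integrable_const (1:ℝ)).add hS4)
      ((hSmeas.pow_const k).aestronglyMeasurable) ?_
    filter_upwards with ω
    simpa using habs k hk (S ω)
  have hS1 : Integrable S μ := by simpa using hSk 1 (by norm_num)
  have hS2 : Integrable (fun ω => S ω ^ 2) μ := hSk 2 (by norm_num)
  have hS3 : Integrable (fun ω => S ω ^ 3) μ := hSk 3 (by norm_num)
  -- B bounds and integrability
  have hBle : ∀ ω, ‖B ω‖ ≤ 1 := by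
    intro ω; rcases hBvals ω with h | h <;> simp [h]
  have hBint : Integrable B μ := by
    refine Integrable.mono' (integrable_const (1:ℝ)) hBmeas.aestronglyMeasurable ?_
    filter_upwards with ω using hBle ω
  -- integrability of S^k * B
  have hSkB : ∀ (k : ℕ), k ≤ 4 → Integrable (fun ω => S ω ^ k * B ω) μ := by
    intro k hk
    refine Integrable.mono' (hSk k hk).abs
      (((hSmeas.pow_const k).mul hBmeas).aestronglyMeasurable) ?_
    filter_upwards with ω
    have := hBle ω
    simp only [norm_mul, Real.norm_eq_abs] at *
    calc |S ω ^ k| * |B ω| ≤ |S ω ^ k| * 1 :=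
          mul_le_mul_of_nonneg_left this (abs_nonneg _)
      _ = |S ω ^ k| := mul_one _
  -- E[B] = p
  have hAmeas : MeasurableSet {ω | B ω = 1} := hBmeas (measurableSet_singleton 1)
  have hEB : ∫ ω, B ω ∂μ = p := by
    have hBind : B = Set.indicator {ω | B ω = 1} (fun _ => (1:ℝ)) := by
      funext ω
      rcases hBvals ω with h | h <;>
        simp [Set.indicator_apply, Set.mem_setOf_eq, h]
    rw [hBind, integral_indicator_const _ hAmeas, measureReal_def, hBp, smul_eq_mul, mul_one,
      ENNReal.toReal_ofReal hp0.le]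
  -- independence of S^k and B
  have hindepk : ∀ (k : ℕ), IndepFun (fun ω => S ω ^ k) B μ := by
    intro k
    exact hindep.comp (measurable_id.pow_const k) measurable_id
  -- E[S^k B] = E[S^k] p
  have hmulk : ∀ (k : ℕ), k ≤ 4 →
      ∫ ω, S ω ^ k * B ω ∂μ = (∫ ω, S ω ^ k ∂μ) * p := by
    intro k hk
    have := IndepFun.integral_fun_mul_eq_mul_integral (hindepk k)
      (hSk k hk).aestronglyMeasurable hBint.aestronglyMeasurable
    simpa [hEB] using this
  set m1 := ∫ ω, S ω ∂μ with hm1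
  set m2 := ∫ ω, S ω ^ 2 ∂μ with hm2
  set m3 := ∫ ω, S ω ^ 3 ∂μ with hm3
  set m4 := ∫ ω, S ω ^ 4 ∂μ with hm4
  have hSB : Integrable (fun ω => S ω * B ω) μ := by
    have := hSkB 1 (by norm_num); simpa using this
  have hθ : ∫ ω', S ω' * B ω' ∂μ = m1 * p := by
    have := hmulk 1 (by norm_num); simpa using this
  set θ := ∫ ω', S ω' * B ω' ∂μ with hθdef
  -- pointwise expansions using B ∈ {0,1}
  have hexp2 : (fun ω => (S ω * B ω - θ) ^ 2)
      = fun ω => S ω ^ 2 * B ω - (2*θ) * (S ω * B ω) + θ ^ 2 := by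
    funext ω; rcases hBvals ω with h | h <;> rw [h] <;> ring
  have hexp4 : (fun ω => (S ω * B ω - θ) ^ 4)
      = fun ω => S ω ^ 4 * B ω - (4*θ) * (S ω ^ 3 * B ω)
          + (6*θ^2) * (S ω ^ 2 * B ω) - (4*θ^3) * (S ω * B ω) + θ ^ 4 := by
    funext ω; rcases hBvals ω with h | h <;> rw [h] <;> ring
  -- compute the two central moments
  have hS2B := hSkB 2 (by norm_num)
  have hS3B := hSkB 3 (by norm_num)
  have hS4B := hSkB 4 (by norm_num)
  have i2c : Integrable (fun ω => (2*θ) * (S ω * B ω)) μ := hSB.const_mul _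
  have i2s : Integrable (fun ω => S ω ^ 2 * B ω - (2*θ) * (S ω * B ω)) μ := hS2B.sub i2c
  have hV2 : ∫ ω, (S ω * B ω - θ) ^ 2 ∂μ = m2 * p - (2*θ) * θ + θ ^ 2 := by
    rw [hexp2, integral_add i2s (integrable_const _), integral_sub hS2B i2c,
      integral_const_mul, hmulk 2 (by norm_num), ← hθdef, integral_const]
    simp [measure_univ, hm2]
  have i4a : Integrable (fun ω => (4*θ) * (S ω ^ 3 * B ω)) μ := hS3B.const_mul _
  have i4b : Integrable (fun ω => (6*θ^2) * (S ω ^ 2 * B ω)) μ := hS2B.const_mul _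
  have i4c : Integrable (fun ω => (4*θ^3) * (S ω * B ω)) μ := hSB.const_mul _
  have i4s1 : Integrable (fun ω => S ω ^ 4 * B ω - (4*θ) * (S ω ^ 3 * B ω)) μ := hS4B.sub i4a
  have i4s2 : Integrable (fun ω => S ω ^ 4 * B ω - (4*θ) * (S ω ^ 3 * B ω)
      + (6*θ^2) * (S ω ^ 2 * B ω)) μ := i4s1.add i4b
  have i4s3 : Integrable (fun ω => S ω ^ 4 * B ω - (4*θ) * (S ω ^ 3 * B ω)
      + (6*θ^2) * (S ω ^ 2 * B ω) - (4*θ^3) * (S ω * B ω)) μ := i4s2.sub i4c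
  have hV4 : ∫ ω, (S ω * B ω - θ) ^ 4 ∂μ
      = m4 * p - (4*θ) * (m3 * p) + (6*θ^2) * (m2 * p) - (4*θ^3) * θ + θ ^ 4 := by
    rw [hexp4, integral_add i4s3 (integrable_const _), integral_sub i4s2 i4c,
      integral_add i4s1 i4b, integral_sub hS4B i4a,
      integral_const_mul, integral_const_mul, integral_const_mul,
      hmulk 4 (by norm_num), hmulk 3 (by norm_num), hmulk 2 (by norm_num),
      ← hθdef, integral_const]
    simp [measure_univ, hm2, hm3, hm4]
  -- m2 > 0
  have hm2pos : 0 < m2 := by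
    rcases lt_or_ge 0 m2 with h | h
    · exact h
    · exfalso
      have hnn : 0 ≤ᵐ[μ] fun ω => S ω ^ 2 := by
        filter_upwards with ω using sq_nonneg _
      have hz : m2 = 0 := le_antisymm h (integral_nonneg fun ω => sq_nonneg _)
      have := (integral_eq_zero_iff_of_nonneg_ae hnn hS2).1 hz
      have hae : ∀ᵐ ω ∂μ, S ω = 0 := by
        filter_upwards [this] with ω hω
        have : S ω ^ 2 = 0 := hω
        exact pow_eq_zero_iff (by norm_num) |>.1 this
      have hmeas : MeasurableSet {ω | S ω = 0} := hSmeas (measurableSet_singleton 0)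
      have hcompl : μ {ω | S ω = 0}ᶜ = 0 := by
        have := ae_iff.1 hae
        simpa [Set.compl_setOf] using this
      have : μ {ω | S ω = 0} = 1 := (prob_compl_eq_zero_iff hmeas).1 hcompl
      exact absurd this (ne_of_lt hS0)
  -- Cauchy-Schwarz consequences
  have hcs1 : m1 ^ 2 ≤ m2 := by
    have := cs_integral μ S (fun _ => 1) hS2 (by simpa using integrable_const (1:ℝ))
      (by simpa using hS1)
    simpa [measure_univ] using this
  have hcs2 : m2 ^ 2 ≤ m4 := by
    have := cs_integral μ (fun ω => S ω ^ 2) (fun _ => 1)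
      (by simpa [← pow_mul] using hS4) (by simpa using integrable_const (1:ℝ))
      (by simpa using hS2)
    simpa [measure_univ, ← pow_mul] using this
  have hcs3 : m3 ^ 2 ≤ m2 * m4 := by
    have := cs_integral μ S (fun ω => S ω ^ 2) hS2 (by simpa [← pow_mul] using hS4)
      (by simpa [← pow_succ'] using hS3)
    simpa [← pow_mul, ← pow_succ'] using this
  have hm4pos : 0 < m4 := lt_of_lt_of_le (by positivity) hcs2
  -- apply the core inequality with x = |m1|, y = |m3|, t = √m2, s = √m4
  have ht2 : Real.sqrt m2 ^ 2 = m2 := Real.sq_sqrt hm2pos.le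
  have hs2 : Real.sqrt m4 ^ 2 = m4 := Real.sq_sqrt hm4pos.le
  have hkey := core_ineq (|m1|) (|m3|) (Real.sqrt m2) (Real.sqrt m4) p hp0 hp1
    (Real.sqrt_pos.2 hm2pos)
    (by rw [ht2, ← Real.sqrt_sq hm2pos.le]; exact Real.sqrt_le_sqrt hcs2)
    (abs_nonneg _)
    (by rw [← Real.sqrt_sq_eq_abs]; exact Real.sqrt_le_sqrt hcs1)
    (abs_nonneg _)
    (by rw [← Real.sqrt_sq_eq_abs, ← Real.sqrt_mul hm2pos.le]
        exact Real.sqrt_le_sqrt hcs3)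
  rw [hs2] at hkey
  have hxy : m1 * m3 ≤ |m1| * |m3| := by
    rw [← abs_mul]; exact le_abs_self _
  have habsm1 : |m1| ^ 2 = m1 ^ 2 := sq_abs m1
  have habsm14 : |m1| ^ 4 = m1 ^ 4 := by
    rw [show (4:ℕ) = 2*2 by norm_num, pow_mul, pow_mul, habsm1]
  have ht4 : Real.sqrt m2 ^ 4 = m2 ^ 2 := by
    rw [show (4:ℕ) = 2*2 by norm_num, pow_mul, ht2]
  rw [ht2, ht4, habsm1, habsm14] at hkey
  have hF : m4 - 4*p*(m1*m3) + 12*p^2*m2*m1^2 - 6*p^3*m1^4 - 3*p*m2^2 > 0 := by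
    nlinarith [mul_le_mul_of_nonneg_left hxy (by positivity : (0:ℝ) ≤ 4*p)]
  rw [hV4, hV2, hθ]
  nlinarith [mul_pos hp0 hF]
end

section
/- Let M_1, M_2 ∈ ℝ^{k×k} and let M ∈ ℝ^{2k×2k} be the block matrix with M_1 in the two diagonal blocks and M_2 in the two off-diagonal blocks. Then there exists a singular value decomposition M = U·D·Vᵀ, with U, V ∈ ℝ^{2k×2k} orthogonal and D diagonal with nonnegative entries, such that the product N = U·Vᵀ has the same block structure: N has some matrix N_1 ∈ ℝ^{k×k} in both diagonal blocks and some matrix N_2 ∈ ℝ^{k×k} in both off-diagonal blocks. -/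
open Matrix

lemma svd_exists {n : ℕ} (A : Matrix (Fin n) (Fin n) ℝ) :
    ∃ (U V D : Matrix (Fin n) (Fin n) ℝ),
      Uᵀ * U = 1 ∧ Vᵀ * V = 1 ∧ D.IsDiag ∧ (∀ i, 0 ≤ D i i) ∧ A = U * D * Vᵀ := by
  have hct : Aᴴ = Aᵀ := conjTranspose_eq_transpose_of_trivial A
  have hH : (Aᵀ * A).IsHermitian := by rw [← hct]; exact isHermitian_conjTranspose_mul_self A
  have hPSD : (Aᵀ * A).PosSemidef := by rw [← hct]; exact posSemidef_conjTranspose_mul_self A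
  set μ : Fin n → ℝ := hH.eigenvalues with hμdef
  have hμ : ∀ i, 0 ≤ μ i := hPSD.eigenvalues_nonneg
  set V0 : Matrix (Fin n) (Fin n) ℝ := (hH.eigenvectorUnitary : Matrix (Fin n) (Fin n) ℝ) with hV0def
  have hV0l : V0ᵀ * V0 = 1 := by
    rw [← conjTranspose_eq_transpose_of_trivial, ← star_eq_conjTranspose]
    exact Unitary.star_mul_self_of_mem hH.eigenvectorUnitary.2
  have hV0r : V0 * V0ᵀ = 1 := by
    rw [← conjTranspose_eq_transpose_of_trivial, ← star_eq_conjTranspose]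
    exact Unitary.mul_star_self_of_mem hH.eigenvectorUnitary.2
  have hspec : Aᵀ * A = V0 * diagonal μ * V0ᵀ := by
    have := hH.spectral_theorem
    simpa [star_eq_conjTranspose, conjTranspose_eq_transpose_of_trivial, Function.comp] using this
  set d : Fin n → ℝ := fun i => Real.sqrt (μ i) with hddef
  have hd2 : ∀ i, d i ^ 2 = μ i := fun i => Real.sq_sqrt (hμ i)
  set B : Matrix (Fin n) (Fin n) ℝ := A * V0 with hBdef
  have hBtB : Bᵀ * B = diagonal μ := by
    rw [hBdef, transpose_mul]
    calc V0ᵀ * Aᵀ * (A * V0) = V0ᵀ * (Aᵀ * A) * V0 := by rw [Matrix.mul_assoc, Matrix.mul_assoc, Matrix.mul_assoc]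
      _ = V0ᵀ * (V0 * diagonal μ * V0ᵀ) * V0 := by rw [hspec]
      _ = (V0ᵀ * V0) * diagonal μ * (V0ᵀ * V0) := by simp only [Matrix.mul_assoc]
      _ = diagonal μ := by rw [hV0l]; simp
  have hentry : ∀ i j, ∑ r, B r i * B r j = diagonal μ i j := by
    intro i j
    rw [← hBtB]
    simp [mul_apply, transpose_apply]
  have hBzero : ∀ j, μ j = 0 → ∀ r, B r j = 0 := by
    intro j hj r
    have h0 : ∑ r, B r j * B r j = 0 := by rw [hentry]; simp [hj]
    have := (Finset.sum_eq_zero_iff_of_nonneg (fun r _ => mul_self_nonneg (B r j))).mp h0 r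
      (Finset.mem_univ r)
    exact mul_self_eq_zero.mp this
  set v : Fin n → EuclideanSpace ℝ (Fin n) :=
    fun j => (d j)⁻¹ • ((WithLp.equiv 2 _).symm (fun r => B r j)) with hvdef
  have hvapp : ∀ j r, v j r = (d j)⁻¹ * B r j := by intro j r; rfl
  set s : Set (Fin n) := {j | μ j ≠ 0} with hsdef
  have horth : Orthonormal ℝ (s.restrict v) := by
    rw [orthonormal_iff_ite]
    rintro ⟨i, hi⟩ ⟨j, hj⟩
    have hinner : (inner ℝ (v i) (v j) : ℝ) = (d i)⁻¹ * (d j)⁻¹ * diagonal μ i j := by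
      rw [PiLp.inner_apply, ← hentry]
      simp only [RCLike.inner_apply, conj_trivial, hvapp]
      rw [Finset.mul_sum]
      congr 1; ext r; ring
    simp only [Set.restrict_apply, Subtype.mk.injEq]
    by_cases hij : i = j
    · subst hij
      rw [if_pos rfl, show inner ℝ (s.restrict v ⟨i, hi⟩) (s.restrict v ⟨i, hj⟩) = inner ℝ (v i) (v i) from rfl, hinner, diagonal_apply_eq]
      have hdne : d i ≠ 0 := fun h => hi (by rw [← hd2 i, h]; ring)
      rw [← hd2 i]
      field_simp
    · rw [if_neg hij, show inner ℝ (s.restrict v ⟨i, hi⟩) (s.restrict v ⟨j, hj⟩) = inner ℝ (v i) (v j) from rfl, hinner, diagonal_apply_ne _ hij, mul_zero]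
  have hcard : Module.finrank ℝ (EuclideanSpace ℝ (Fin n)) = Fintype.card (Fin n) := by
    simp
  obtain ⟨b, hb⟩ := horth.exists_orthonormalBasis_extension_of_card_eq hcard
  set U : Matrix (Fin n) (Fin n) ℝ := Matrix.of (fun r j => b j r) with hUdef
  have hUU : Uᵀ * U = 1 := by
    ext i j
    have := (orthonormal_iff_ite.mp b.orthonormal) i j
    rw [PiLp.inner_apply] at this
    simp only [RCLike.inner_apply, conj_trivial] at this
    simp only [mul_apply, transpose_apply, hUdef, of_apply, one_apply]
    rw [← this]; exact Finset.sum_congr rfl (fun _ _ => mul_comm _ _)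
  have hUD : U * diagonal d = B := by
    ext r j
    rw [mul_diagonal]
    by_cases hj : μ j = 0
    · have : d j = 0 := by rw [hddef]; simp [hj]
      rw [this, mul_zero, hBzero j hj r]
    · have hdne : d j ≠ 0 := fun h => hj (by rw [← hd2 j, h]; ring)
      have : U r j = (d j)⁻¹ * B r j := by
        rw [hUdef]; simp only [of_apply]
        rw [hb j hj, hvapp]
      rw [this]
      field_simp
  refine ⟨U, V0, diagonal d, hUU, hV0l, isDiag_diagonal d, fun i => by simp [hddef, Real.sqrt_nonneg], ?_⟩
  rw [hUD, hBdef, Matrix.mul_assoc, hV0r, Matrix.mul_one]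

/-- Block-symmetric matrices admit an SVD `M = U·D·Vᵀ` such that `U·Vᵀ` retains the
same block-symmetric structure. -/
theorem blockwise_symmetric_svd
    {k : ℕ} (M₁ M₂ : Matrix (Fin k) (Fin k) ℝ) :
    ∃ (U V D : Matrix (Fin k ⊕ Fin k) (Fin k ⊕ Fin k) ℝ)
      (N₁ N₂ : Matrix (Fin k) (Fin k) ℝ),
      Uᵀ * U = 1 ∧ Vᵀ * V = 1 ∧
      D.IsDiag ∧ (∀ i, 0 ≤ D i i) ∧
      Matrix.fromBlocks M₁ M₂ M₂ M₁ = U * D * Vᵀ ∧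
      U * Vᵀ = Matrix.fromBlocks N₁ N₂ N₂ N₁ := by
  obtain ⟨U₁, V₁, D₁, hU₁, hV₁, hD₁, hD₁n, hA₁⟩ := svd_exists (M₁ + M₂)
  obtain ⟨U₂, V₂, D₂, hU₂, hV₂, hD₂, hD₂n, hA₂⟩ := svd_exists (M₁ - M₂)
  set c : ℝ := (Real.sqrt 2)⁻¹ with hcdef
  have hcc : c * c = 1 / 2 := by
    rw [hcdef, ← mul_inv, Real.mul_self_sqrt (by norm_num)]
    norm_num
  set P : Matrix (Fin k ⊕ Fin k) (Fin k ⊕ Fin k) ℝ :=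
    c • fromBlocks 1 1 1 (-1) with hPdef
  have hPt : Pᵀ = P := by
    rw [hPdef, transpose_smul, fromBlocks_transpose]
    simp
  have hPP : P * P = 1 := by
    rw [hPdef, Matrix.smul_mul, Matrix.mul_smul, smul_smul, hcc, fromBlocks_multiply]
    ext i j
    rcases i with i | i <;> rcases j with j | j <;>
      simp [Matrix.one_apply, Matrix.smul_apply] <;> split <;> norm_num
  have conjP : ∀ (X Y : Matrix (Fin k) (Fin k) ℝ),
      P * fromBlocks X 0 0 Y * P =
        fromBlocks ((1/2 : ℝ) • (X + Y)) ((1/2 : ℝ) • (X - Y))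
          ((1/2 : ℝ) • (X - Y)) ((1/2 : ℝ) • (X + Y)) := by
    intro X Y
    rw [hPdef, Matrix.smul_mul, Matrix.smul_mul, Matrix.mul_smul, smul_smul, hcc]
    rw [fromBlocks_multiply, fromBlocks_multiply]
    ext i j
    rcases i with i | i <;> rcases j with j | j <;>
      simp [Matrix.smul_apply, Matrix.add_apply, Matrix.sub_apply, Matrix.neg_apply] <;> ring
  have hmidU : fromBlocks U₁ 0 0 U₂ * fromBlocks D₁ 0 0 D₂ *
      fromBlocks V₁ᵀ 0 0 V₂ᵀ = fromBlocks (U₁ * D₁ * V₁ᵀ) 0 0 (U₂ * D₂ * V₂ᵀ) := by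
    rw [fromBlocks_multiply, fromBlocks_multiply]
    simp
  refine ⟨P * fromBlocks U₁ 0 0 U₂, P * fromBlocks V₁ 0 0 V₂, fromBlocks D₁ 0 0 D₂,
    (1/2 : ℝ) • (U₁ * V₁ᵀ + U₂ * V₂ᵀ), (1/2 : ℝ) • (U₁ * V₁ᵀ - U₂ * V₂ᵀ), ?_, ?_, ?_, ?_, ?_, ?_⟩
  · rw [transpose_mul, hPt, Matrix.mul_assoc, ← Matrix.mul_assoc P, hPP, Matrix.one_mul,
      fromBlocks_transpose, fromBlocks_multiply]
    simp [hU₁, hU₂, fromBlocks_one]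
  · rw [transpose_mul, hPt, Matrix.mul_assoc, ← Matrix.mul_assoc P, hPP, Matrix.one_mul,
      fromBlocks_transpose, fromBlocks_multiply]
    simp [hV₁, hV₂, fromBlocks_one]
  · exact hD₁.fromBlocks hD₂
  · rintro (i | i)
    · simpa using hD₁n i
    · simpa using hD₂n i
  · calc fromBlocks M₁ M₂ M₂ M₁
        = P * fromBlocks (M₁ + M₂) 0 0 (M₁ - M₂) * P := by
          rw [conjP]
          ext i j
          rcases i with i | i <;> rcases j with j | j <;>
            simp [Matrix.smul_apply, Matrix.add_apply, Matrix.sub_apply] <;> ring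
      _ = P * (fromBlocks U₁ 0 0 U₂ * fromBlocks D₁ 0 0 D₂ *
            fromBlocks V₁ᵀ 0 0 V₂ᵀ) * P := by rw [hmidU, ← hA₁, ← hA₂]
      _ = P * fromBlocks U₁ 0 0 U₂ * fromBlocks D₁ 0 0 D₂ *
            (P * fromBlocks V₁ 0 0 V₂)ᵀ := by
          rw [transpose_mul, hPt, fromBlocks_transpose, transpose_zero]
          simp only [Matrix.mul_assoc]
  · rw [transpose_mul, hPt, fromBlocks_transpose, transpose_zero]
    calc P * fromBlocks U₁ 0 0 U₂ * (fromBlocks V₁ᵀ 0 0 V₂ᵀ * P)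
        = P * (fromBlocks U₁ 0 0 U₂ * fromBlocks V₁ᵀ 0 0 V₂ᵀ) * P := by
          simp only [Matrix.mul_assoc]
      _ = P * fromBlocks (U₁ * V₁ᵀ) 0 0 (U₂ * V₂ᵀ) * P := by
          rw [fromBlocks_multiply]; simp
      _ = _ := by rw [conjP]
end

section
/- Fix a positive integer k and constants C_0 > 0, λ > 0. For each n, let Z̃ be an n × k random matrix whose rows are i.i.d., whose k coordinates within a row are mutually independent with mean 0, variance 1, finite fourth moment E[Z̃_{1j}^4] > 3 for each j, and tails P(|Z̃_{1j}| > t) ≤ C_0·exp(−λ·t) for all t > 0. For an orthogonal matrix O ∈ O(k), define the sample Varimax objective V̂(O) = Σ_{ℓ=1}^k [ (1/n)·Σ_{i=1}^n (Z̃O)_{iℓ}^4 − ( (1/n)·Σ_{i=1}^n (Z̃O)_{iℓ}^2 )^2 ] and the population Varimax objective V(O) = Σ_{ℓ=1}^k ( E[((Z̃O)_{1ℓ})^4] − (E[((Z̃O)_{1ℓ})^2])^2 ). Then for every δ > 0, P( sup_{O ∈ O(k)} |V̂(O) − V(O)| > n^{δ − 1/2} ) → 0 as n → ∞. -/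
open MeasureTheory ProbabilityTheory Filter Matrix

section Aux

lemma amgm4 {A B C D : ℝ} (hA : 0 ≤ A) (hB : 0 ≤ B) (hC : 0 ≤ C) (hD : 0 ≤ D) :
    A * B * C * D ≤ (A ^ 4 + B ^ 4 + C ^ 4 + D ^ 4) / 4 := by
  nlinarith [sq_nonneg (A * B - C * D), sq_nonneg (A ^ 2 - B ^ 2), sq_nonneg (C ^ 2 - D ^ 2),
    mul_nonneg (mul_nonneg hA hB) (mul_nonneg hC hD), mul_nonneg hA hB, mul_nonneg hC hD,
    sq_nonneg (A * B + C * D), sq_nonneg (A - B), sq_nonneg (C - D)]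

lemma abs_mul4_le (a b c d : ℝ) : |a * b * c * d| ≤ (|a| ^ 4 + |b| ^ 4 + |c| ^ 4 + |d| ^ 4) / 4 := by
  have h := amgm4 (abs_nonneg a) (abs_nonneg b) (abs_nonneg c) (abs_nonneg d)
  calc |a * b * c * d| = |a| * |b| * |c| * |d| := by simp [abs_mul]
    _ ≤ _ := h

lemma sq_mul4_le (a b c d : ℝ) :
    (a * b * c * d) ^ 2 ≤ (|a| ^ 8 + |b| ^ 8 + |c| ^ 8 + |d| ^ 8) / 4 := by
  have h := amgm4 (sq_nonneg a) (sq_nonneg b) (sq_nonneg c) (sq_nonneg d)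
  have e1 : ∀ x : ℝ, (x ^ 2) ^ 4 = |x| ^ 8 := by
    intro x
    rw [show (x ^ 2) ^ 4 = x ^ 8 by ring, pow_abs,
      abs_of_nonneg (by positivity : (0:ℝ) ≤ x ^ 8)]
  calc (a * b * c * d) ^ 2 = a ^ 2 * b ^ 2 * c ^ 2 * d ^ 2 := by ring
    _ ≤ ((a ^ 2) ^ 4 + (b ^ 2) ^ 4 + (c ^ 2) ^ 4 + (d ^ 2) ^ 4) / 4 := h
    _ = (|a| ^ 8 + |b| ^ 8 + |c| ^ 8 + |d| ^ 8) / 4 := by rw [e1, e1, e1, e1]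

lemma abs_mul2_le (a b : ℝ) : |a * b| ≤ (|a| ^ 2 + |b| ^ 2) / 2 := by
  rw [abs_mul]
  nlinarith [sq_nonneg (|a| - |b|), abs_nonneg a, abs_nonneg b]

lemma sq_mul2_le (a b : ℝ) : (a * b) ^ 2 ≤ (|a| ^ 4 + |b| ^ 4) / 2 := by
  nlinarith [sq_nonneg (a^2 - b^2), sq_nonneg a, sq_nonneg b, sq_abs a, sq_abs b]

lemma tail_integrable {Ω : Type*} [MeasurableSpace Ω] {μ : Measure Ω} [IsProbabilityMeasure μ]
    {X : Ω → ℝ} (hX : Measurable X) {C₀ lam : ℝ} (hC₀ : 0 < C₀) (hlam : 0 < lam)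
    (htail : ∀ t : ℝ, 0 < t → μ {ω | |X ω| > t} ≤ ENNReal.ofReal (C₀ * Real.exp (-lam * t)))
    (m : ℕ) (hm : 1 ≤ m) : Integrable (fun ω => |X ω| ^ m) μ := by
  have hmble : Measurable fun ω => |X ω| ^ m := (hX.abs).pow_const m
  refine ⟨hmble.aestronglyMeasurable, ?_⟩
  rw [hasFiniteIntegral_iff_ofReal (Filter.Eventually.of_forall fun ω => by positivity)]
  have key := lintegral_comp_eq_lintegral_meas_le_mul μ (f := fun ω => |X ω|)
      (g := fun t => (m : ℝ) * t ^ (m - 1))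
      (Filter.Eventually.of_forall fun ω => abs_nonneg _) hX.abs.aemeasurable
      (fun t ht => (Continuous.intervalIntegrable (by continuity) 0 t))
      ((ae_restrict_iff' measurableSet_Ioi).2 (Filter.Eventually.of_forall fun t ht => by
        have ht' : (0:ℝ) < t := ht
        positivity))
  have hinner : ∀ ω, (∫ t in (0:ℝ)..|X ω|, (m : ℝ) * t ^ (m - 1)) = |X ω| ^ m := by
    intro ω
    rw [intervalIntegral.integral_const_mul, integral_pow]
    have h1 : m - 1 + 1 = m := Nat.succ_pred_eq_of_pos hm
    rw [h1]
    have : (0:ℝ) < m := by exact_mod_cast hm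
    field_simp
    rw [zero_pow (by omega), sub_zero, Nat.cast_sub hm]; push_cast; ring
  simp_rw [hinner] at key
  rw [key]
  have hb : ∀ t ∈ Set.Ioi (0:ℝ), μ {a | t ≤ |X a|} * ENNReal.ofReal ((m:ℝ) * t ^ (m-1))
      ≤ ENNReal.ofReal ((C₀ * Real.exp (-(lam/2) * t)) * ((m:ℝ) * t ^ (m-1))) := by
    intro t ht
    have ht' : (0:ℝ) < t := ht
    have htb : μ {a | t ≤ |X a|} ≤ ENNReal.ofReal (C₀ * Real.exp (-(lam/2) * t)) := by
      calc μ {a | t ≤ |X a|} ≤ μ {a | |X a| > t/2} := by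
            apply measure_mono; intro a ha
            simp only [Set.mem_setOf_eq] at *
            linarith
        _ ≤ ENNReal.ofReal (C₀ * Real.exp (-lam * (t/2))) := htail _ (by linarith)
        _ = ENNReal.ofReal (C₀ * Real.exp (-(lam/2) * t)) := by
            rw [show -lam * (t/2) = -(lam/2)*t by ring]
    calc μ {a | t ≤ |X a|} * ENNReal.ofReal ((m:ℝ) * t ^ (m-1))
        ≤ ENNReal.ofReal (C₀ * Real.exp (-(lam/2) * t)) * ENNReal.ofReal ((m:ℝ) * t ^ (m-1)) :=
          mul_le_mul_left htb _
      _ = ENNReal.ofReal ((C₀ * Real.exp (-(lam/2) * t)) * ((m:ℝ) * t ^ (m-1))) :=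
          (ENNReal.ofReal_mul (by positivity)).symm
  calc ∫⁻ t in Set.Ioi 0, μ {a | t ≤ |X a|} * ENNReal.ofReal ((m:ℝ) * t ^ (m-1))
      ≤ ∫⁻ t in Set.Ioi 0,
          ENNReal.ofReal ((C₀ * Real.exp (-(lam/2) * t)) * ((m:ℝ) * t ^ (m-1))) :=
        setLIntegral_mono_ae (by fun_prop) (Filter.Eventually.of_forall hb)
    _ < ⊤ := by
        have h0 : IntegrableOn (fun x : ℝ => x ^ ((m:ℝ)-1) * Real.exp (-(lam/2) * x ^ (1:ℝ)))
            (Set.Ioi 0) :=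
          integrableOn_rpow_mul_exp_neg_mul_rpow
            (by
              have h : (1:ℝ) ≤ m := by exact_mod_cast hm
              linarith) one_pos (by positivity)
        have h1 : IntegrableOn
            (fun x : ℝ => (C₀ * (m:ℝ)) * (x ^ ((m:ℝ)-1) * Real.exp (-(lam/2) * x ^ (1:ℝ))))
            (Set.Ioi 0) := h0.const_mul _
        have hint : IntegrableOn
            (fun t : ℝ => (C₀ * Real.exp (-(lam/2) * t)) * ((m:ℝ) * t ^ (m-1)))
            (Set.Ioi 0) := by
          apply h1.congr_fun ?_ measurableSet_Ioi
          intro x hx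
          have hx' : (0:ℝ) < x := hx
          simp only [Real.rpow_one,
            show ((m:ℝ) - 1) = ((m - 1 : ℕ) : ℝ) by push_cast [Nat.cast_sub hm]; ring,
            Real.rpow_natCast]
          ring
        exact hint.setLIntegral_lt_top

lemma cheb_tendsto {Ω : Type*} [MeasurableSpace Ω] {μ : Measure Ω} [IsProbabilityMeasure μ]
    (X : ℕ → Ω → ℝ) (hX0 : MemLp (X 0) 2 μ)
    (hind : iIndepFun X μ)
    (hid : ∀ i, IdentDistrib (X i) (X 0) μ μ) (a : ℕ → ℝ) (ha : ∀ n, 1 ≤ n → 0 < a n)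
    (ha2 : Tendsto (fun n : ℕ => (n : ℝ) * a n ^ 2) atTop atTop) :
    Tendsto (fun n => μ {ω | a n ≤ |(1 / (n:ℝ)) * ∑ i ∈ Finset.range n, X i ω - ∫ ω', X 0 ω' ∂μ|})
      atTop (nhds 0) := by
  have hXi : ∀ i, MemLp (X i) 2 μ := fun i => (hid i).symm.memLp_snd hX0
  set m := ∫ ω', X 0 ω' ∂μ with hm
  set v := variance (X 0) μ with hv
  have hvnn : 0 ≤ v := variance_nonneg _ _
  have key : ∀ n : ℕ, 1 ≤ n →
      μ {ω | a n ≤ |(1 / (n:ℝ)) * ∑ i ∈ Finset.range n, X i ω - m|}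
        ≤ ENNReal.ofReal (v / ((n:ℝ) * a n ^ 2)) := by
    intro n hn
    have hnpos : (0:ℝ) < n := by exact_mod_cast hn
    set S : Ω → ℝ := ∑ i ∈ Finset.range n, X i with hS
    have hSapp : ∀ ω, S ω = ∑ i ∈ Finset.range n, X i ω := by
      intro ω; rw [hS]; simp [Finset.sum_apply]
    have hSmem : MemLp S 2 μ := memLp_finset_sum' (Finset.range n) (fun i _ => hXi i)
    have hES : μ[S] = n * m := by
      have : μ[S] = ∫ ω, ∑ i ∈ Finset.range n, X i ω ∂μ := by
        apply integral_congr_ae; exact Filter.Eventually.of_forall fun ω => hSapp ω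
      rw [this, integral_finset_sum _ (fun i _ => (hXi i).integrable one_le_two)]
      simp [fun i => (hid i).integral_eq, hm]
    have hVS : variance S μ = n * v := by
      rw [hS, IndepFun.variance_sum (fun i _ => hXi i)
        (fun i _ j _ hij => hind.indepFun hij)]
      simp [fun i => (hid i).variance_eq, hv]
    have hset : {ω | a n ≤ |(1 / (n:ℝ)) * ∑ i ∈ Finset.range n, X i ω - m|}
        = {ω | (n:ℝ) * a n ≤ |S ω - μ[S]|} := by
      ext ω
      simp only [Set.mem_setOf_eq, hES]
      simp only [hSapp]
      rw [show (1 / (n:ℝ)) * (∑ i ∈ Finset.range n, X i ω) - m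
            = ((∑ i ∈ Finset.range n, X i ω) - n * m) / n by field_simp,
        abs_div, abs_of_pos hnpos, le_div_iff₀ hnpos, mul_comm]
    rw [hset]
    calc μ {ω | (n:ℝ) * a n ≤ |S ω - μ[S]|}
        ≤ ENNReal.ofReal (variance S μ / ((n:ℝ) * a n) ^ 2) :=
          meas_ge_le_variance_div_sq hSmem (by have := ha n hn; positivity)
      _ = ENNReal.ofReal (v / ((n:ℝ) * a n ^ 2)) := by
          rw [hVS, show ((n:ℝ) * a n)^2 = (n:ℝ) * ((n:ℝ) * a n ^ 2) by ring,
            mul_div_mul_left _ _ hnpos.ne']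
  have hub : Tendsto (fun n : ℕ => ENNReal.ofReal (v / ((n:ℝ) * a n ^ 2))) atTop (nhds 0) := by
    have h2 : Tendsto (fun n : ℕ => v / ((n:ℝ) * a n ^ 2)) atTop (nhds 0) :=
      Tendsto.div_atTop tendsto_const_nhds ha2
    simpa [ENNReal.ofReal_zero, Function.comp_def] using (ENNReal.continuous_ofReal.tendsto 0).comp h2
  apply tendsto_of_tendsto_of_tendsto_of_le_of_le' tendsto_const_nhds hub
  · exact Filter.Eventually.of_forall fun n => zero_le
  · filter_upwards [Filter.eventually_ge_atTop 1] with n hn using key n hn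

end Aux

set_option maxHeartbeats 2000000 in
/-- Uniform convergence of the sample Varimax objective to its population version over
the orthogonal group: `P(sup_{O ∈ O(k)} |V̂(O) − V(O)| > n^{δ−1/2}) → 0`. -/
theorem varimax_uniform_convergence
    {Ω : Type*} [MeasurableSpace Ω] (μ : Measure Ω) [IsProbabilityMeasure μ]
    (k : ℕ) (hk : 0 < k) (C₀ lam : ℝ) (hC₀ : 0 < C₀) (hlam : 0 < lam)
    (Z : ℕ → Ω → (Fin k → ℝ)) (hmeas : ∀ i, Measurable (Z i))
    (hrows_indep : iIndepFun Z μ)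
    (hrows_ident : ∀ i, IdentDistrib (Z i) (Z 0) μ μ)
    (hcols_indep : iIndepFun (fun j (ω : Ω) => Z 0 ω j) μ)
    (hmean : ∀ j, (∫ ω, Z 0 ω j ∂μ) = 0)
    (hvar : ∀ j, (∫ ω, (Z 0 ω j) ^ 2 ∂μ) = 1)
    (hmom4 : ∀ j, Integrable (fun ω => (Z 0 ω j) ^ 4) μ)
    (hlepto : ∀ j, (∫ ω, (Z 0 ω j) ^ 4 ∂μ) > 3)
    (htail : ∀ (j : Fin k) (t : ℝ), 0 < t →
      μ {ω | |Z 0 ω j| > t} ≤ ENNReal.ofReal (C₀ * Real.exp (-lam * t))) :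
    ∀ δ : ℝ, 0 < δ →
      Tendsto
        (fun n : ℕ =>
          μ {ω |
            (⨆ O : {O : Matrix (Fin k) (Fin k) ℝ // Oᵀ * O = 1},
              |(∑ ℓ : Fin k,
                  ((1 / (n : ℝ)) * ∑ i ∈ Finset.range n,
                      (∑ j, Z i ω j * (O : Matrix (Fin k) (Fin k) ℝ) j ℓ) ^ 4
                    - ((1 / (n : ℝ)) * ∑ i ∈ Finset.range n,
                        (∑ j, Z i ω j * (O : Matrix (Fin k) (Fin k) ℝ) j ℓ) ^ 2) ^ 2))
                - (∑ ℓ : Fin k,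
                    ((∫ ω', (∑ j, Z 0 ω' j * (O : Matrix (Fin k) (Fin k) ℝ) j ℓ) ^ 4 ∂μ)
                      - (∫ ω', (∑ j, Z 0 ω' j * (O : Matrix (Fin k) (Fin k) ℝ) j ℓ) ^ 2 ∂μ) ^ 2))|)
              > (n : ℝ) ^ (δ - 1 / 2)})
        atTop (nhds 0) := by
  classical
  intro δ hδ
  haveI : Nonempty {O : Matrix (Fin k) (Fin k) ℝ // Oᵀ * O = 1} :=
    ⟨⟨1, by simp⟩⟩
  have hkR : (0:ℝ) < k := by exact_mod_cast hk
  -- coordinate measurability and moments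
  have hZmeas : ∀ (i : ℕ) (j : Fin k), Measurable fun ω => Z i ω j :=
    fun i j => (measurable_pi_apply j).comp (hmeas i)
  have habs : ∀ (j : Fin k) (m : ℕ), 1 ≤ m → Integrable (fun ω => |Z 0 ω j| ^ m) μ :=
    fun j m hm => tail_integrable (hZmeas 0 j) hC₀ hlam (htail j) m hm
  -- product variables
  set W4 : (Fin 4 → Fin k) → ℕ → Ω → ℝ := fun p i ω => ∏ t, Z i ω (p t) with hW4def
  set W2 : (Fin 2 → Fin k) → ℕ → Ω → ℝ := fun q i ω => ∏ t, Z i ω (q t) with hW2def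
  have hW4meas : ∀ p i, Measurable (W4 p i) :=
    fun p i => Finset.measurable_prod _ fun t _ => hZmeas i (p t)
  have hW2meas : ∀ q i, Measurable (W2 q i) :=
    fun q i => Finset.measurable_prod _ fun t _ => hZmeas i (q t)
  have hsum4 : ∀ (p : Fin 4 → Fin k) (r : ℕ), 1 ≤ r → Integrable
      (fun ω => (|Z 0 ω (p 0)| ^ r + |Z 0 ω (p 1)| ^ r + |Z 0 ω (p 2)| ^ r
        + |Z 0 ω (p 3)| ^ r) / 4) μ := by
    intro p r hr
    have h0 := habs (p 0) r hr
    have h1 := habs (p 1) r hr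
    have h2 := habs (p 2) r hr
    have h3 := habs (p 3) r hr
    exact (((h0.add h1).add h2).add h3).div_const 4
  have hsum2 : ∀ (q : Fin 2 → Fin k) (r : ℕ), 1 ≤ r → Integrable
      (fun ω => (|Z 0 ω (q 0)| ^ r + |Z 0 ω (q 1)| ^ r) / 2) μ := by
    intro q r hr
    exact ((habs (q 0) r hr).add (habs (q 1) r hr)).div_const 2
  have hW4int : ∀ p, Integrable (W4 p 0) μ := by
    intro p
    apply Integrable.mono' (hsum4 p 4 (by norm_num)) (hW4meas p 0).aestronglyMeasurable
    apply Filter.Eventually.of_forall; intro ω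
    rw [Real.norm_eq_abs]
    show |∏ t, Z 0 ω (p t)| ≤ _
    rw [Fin.prod_univ_four]
    exact abs_mul4_le _ _ _ _
  have hW2int : ∀ q, Integrable (W2 q 0) μ := by
    intro q
    apply Integrable.mono' (hsum2 q 2 (by norm_num)) (hW2meas q 0).aestronglyMeasurable
    apply Filter.Eventually.of_forall; intro ω
    rw [Real.norm_eq_abs]
    show |∏ t, Z 0 ω (q t)| ≤ _
    rw [Fin.prod_univ_two]
    exact abs_mul2_le _ _
  have hW4mem : ∀ p, MemLp (W4 p 0) 2 μ := by
    intro p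
    rw [memLp_two_iff_integrable_sq (hW4meas p 0).aestronglyMeasurable]
    apply Integrable.mono' (hsum4 p 8 (by norm_num))
      (((hW4meas p 0).pow_const 2).aestronglyMeasurable)
    apply Filter.Eventually.of_forall; intro ω
    rw [Real.norm_eq_abs, abs_of_nonneg (sq_nonneg _)]
    show (∏ t, Z 0 ω (p t)) ^ 2 ≤ _
    rw [Fin.prod_univ_four]
    exact sq_mul4_le _ _ _ _
  have hW2mem : ∀ q, MemLp (W2 q 0) 2 μ := by
    intro q
    rw [memLp_two_iff_integrable_sq (hW2meas q 0).aestronglyMeasurable]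
    apply Integrable.mono' (hsum2 q 4 (by norm_num))
      (((hW2meas q 0).pow_const 2).aestronglyMeasurable)
    apply Filter.Eventually.of_forall; intro ω
    rw [Real.norm_eq_abs, abs_of_nonneg (sq_nonneg _)]
    show (∏ t, Z 0 ω (q t)) ^ 2 ≤ _
    rw [Fin.prod_univ_two]
    exact sq_mul2_le _ _
  have hW4indep : ∀ p, iIndepFun (W4 p) μ := by
    intro p
    exact hrows_indep.comp (fun _ (v : Fin k → ℝ) => ∏ t, v (p t))
      (fun i => Finset.measurable_prod _ fun t _ => measurable_pi_apply _)
  have hW2indep : ∀ q, iIndepFun (W2 q) μ := by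
    intro q
    exact hrows_indep.comp (fun _ (v : Fin k → ℝ) => ∏ t, v (q t))
      (fun i => Finset.measurable_prod _ fun t _ => measurable_pi_apply _)
  have hW4id : ∀ p i, IdentDistrib (W4 p i) (W4 p 0) μ μ := by
    intro p i
    exact (hrows_ident i).comp (u := fun v : Fin k → ℝ => ∏ t, v (p t))
      (Finset.measurable_prod _ fun t _ => measurable_pi_apply _)
  have hW2id : ∀ q i, IdentDistrib (W2 q i) (W2 q 0) μ μ := by
    intro q i
    exact (hrows_ident i).comp (u := fun v : Fin k → ℝ => ∏ t, v (q t))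
      (Finset.measurable_prod _ fun t _ => measurable_pi_apply _)
  -- population moments
  set m4 : (Fin 4 → Fin k) → ℝ := fun p => ∫ ω', W4 p 0 ω' ∂μ with hm4def
  set m2 : (Fin 2 → Fin k) → ℝ := fun q => ∫ ω', W2 q 0 ω' ∂μ with hm2def
  set M2 : ℝ := ∑ q : Fin 2 → Fin k, |m2 q| with hM2def
  have hM2nn : 0 ≤ M2 := Finset.sum_nonneg fun q _ => abs_nonneg _
  set K : ℝ := (k:ℝ)^5 + (k:ℝ)^3 * (1 + 2*M2) with hKdef
  have hK0 : 0 < K := by positivity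
  set c : ℝ := 1 / (K + 1) with hcdef
  have hc0 : 0 < c := by positivity
  set ε : ℕ → ℝ := fun n => (n:ℝ) ^ (δ - 1/2) with hεdef
  have hεnn : ∀ n, 0 ≤ ε n := fun n => Real.rpow_nonneg (Nat.cast_nonneg n) _
  have hεpos : ∀ n : ℕ, 1 ≤ n → 0 < ε n := by
    intro n hn
    exact Real.rpow_pos_of_pos (by exact_mod_cast hn) _
  set a4 : ℕ → ℝ := fun n => c * ε n with ha4def
  set a2 : ℕ → ℝ := fun n => min (c * ε n) (1/(k:ℝ)^2) with ha2def
  have ha4pos : ∀ n : ℕ, 1 ≤ n → 0 < a4 n := fun n hn => by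
    have := hεpos n hn; positivity
  have ha2pos : ∀ n : ℕ, 1 ≤ n → 0 < a2 n := fun n hn =>
    lt_min (ha4pos n hn) (by positivity)
  -- rate conditions
  have hrate4 : Tendsto (fun n : ℕ => (n : ℝ) * a4 n ^ 2) atTop atTop := by
    have hlim : Tendsto (fun n : ℕ => c^2 * (n:ℝ) ^ (2*δ)) atTop atTop :=
      Tendsto.const_mul_atTop (by positivity)
        ((tendsto_rpow_atTop (by linarith)).comp tendsto_natCast_atTop_atTop)
    apply hlim.congr'
    filter_upwards [Filter.eventually_ge_atTop 1] with n hn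
    have hnp : (0:ℝ) < n := by exact_mod_cast hn
    rw [ha4def]
    simp only [hεdef]
    rw [mul_pow, ← Real.rpow_natCast ((n:ℝ) ^ (δ - 1/2)) 2, ← Real.rpow_mul hnp.le]
    rw [show (n:ℝ) * (c ^ 2 * (n:ℝ) ^ ((δ - 1/2) * (2:ℕ))) =
        c^2 * ((n:ℝ) ^ (1:ℝ) * (n:ℝ) ^ ((δ - 1/2) * (2:ℕ))) by rw [Real.rpow_one]; ring,
      ← Real.rpow_add hnp]
    congr 2
    push_cast
    ring
  have hrate2 : Tendsto (fun n : ℕ => (n : ℝ) * a2 n ^ 2) atTop atTop := by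
    have hk4 : Tendsto (fun n : ℕ => (n:ℝ) * (1/(k:ℝ)^2) ^ 2) atTop atTop :=
      Tendsto.atTop_mul_const (by positivity) tendsto_natCast_atTop_atTop
    have hmin : Tendsto
        (fun n : ℕ => min ((n:ℝ) * a4 n ^ 2) ((n:ℝ) * (1/(k:ℝ)^2) ^ 2)) atTop atTop := by
      rw [tendsto_atTop]
      intro b
      filter_upwards [tendsto_atTop.1 hrate4 b, tendsto_atTop.1 hk4 b] with n h1 h2
      exact le_min h1 h2
    apply tendsto_atTop_mono _ hmin
    intro n
    rcases le_total (c * ε n) (1/(k:ℝ)^2) with h | h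
    · rw [show a2 n = c * ε n from min_eq_left h]; exact min_le_left _ _
    · rw [show a2 n = 1/(k:ℝ)^2 from min_eq_right h]; exact min_le_right _ _
  -- Chebyshev for each moment
  have hT4 : ∀ p, Tendsto (fun n =>
      μ {ω | a4 n ≤ |(1 / (n:ℝ)) * ∑ i ∈ Finset.range n, W4 p i ω - m4 p|}) atTop (nhds 0) :=
    fun p => cheb_tendsto (W4 p) (hW4mem p) (hW4indep p) (hW4id p) a4 ha4pos hrate4
  have hT2 : ∀ q, Tendsto (fun n =>
      μ {ω | a2 n ≤ |(1 / (n:ℝ)) * ∑ i ∈ Finset.range n, W2 q i ω - m2 q|}) atTop (nhds 0) :=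
    fun q => cheb_tendsto (W2 q) (hW2mem q) (hW2indep q) (hW2id q) a2 ha2pos hrate2
  -- expansion identities
  have expand4 : ∀ (i : ℕ) (ω : Ω) (O : Matrix (Fin k) (Fin k) ℝ) (ℓ : Fin k),
      (∑ j, Z i ω j * O j ℓ) ^ 4 = ∑ p : Fin 4 → Fin k, W4 p i ω * ∏ t, O (p t) ℓ := by
    intro i ω O ℓ
    rw [Fintype.sum_pow]
    exact Finset.sum_congr rfl fun p _ => Finset.prod_mul_distrib
  have expand2 : ∀ (i : ℕ) (ω : Ω) (O : Matrix (Fin k) (Fin k) ℝ) (ℓ : Fin k),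
      (∑ j, Z i ω j * O j ℓ) ^ 2 = ∑ q : Fin 2 → Fin k, W2 q i ω * ∏ t, O (q t) ℓ := by
    intro i ω O ℓ
    rw [Fintype.sum_pow]
    exact Finset.sum_congr rfl fun q _ => Finset.prod_mul_distrib
  have S4 : ∀ (n : ℕ) (ω : Ω) (O : Matrix (Fin k) (Fin k) ℝ) (ℓ : Fin k),
      (1 / (n : ℝ)) * ∑ i ∈ Finset.range n, (∑ j, Z i ω j * O j ℓ) ^ 4
        = ∑ p : Fin 4 → Fin k,
            ((1 / (n:ℝ)) * ∑ i ∈ Finset.range n, W4 p i ω) * ∏ t, O (p t) ℓ := by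
    intro n ω O ℓ
    simp_rw [expand4]
    rw [Finset.sum_comm, Finset.mul_sum]
    exact Finset.sum_congr rfl fun p _ => by rw [← Finset.sum_mul, ← mul_assoc]
  have S2 : ∀ (n : ℕ) (ω : Ω) (O : Matrix (Fin k) (Fin k) ℝ) (ℓ : Fin k),
      (1 / (n : ℝ)) * ∑ i ∈ Finset.range n, (∑ j, Z i ω j * O j ℓ) ^ 2
        = ∑ q : Fin 2 → Fin k,
            ((1 / (n:ℝ)) * ∑ i ∈ Finset.range n, W2 q i ω) * ∏ t, O (q t) ℓ := by
    intro n ω O ℓ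
    simp_rw [expand2]
    rw [Finset.sum_comm, Finset.mul_sum]
    exact Finset.sum_congr rfl fun q _ => by rw [← Finset.sum_mul, ← mul_assoc]
  have P4 : ∀ (O : Matrix (Fin k) (Fin k) ℝ) (ℓ : Fin k),
      (∫ ω', (∑ j, Z 0 ω' j * O j ℓ) ^ 4 ∂μ) = ∑ p : Fin 4 → Fin k, m4 p * ∏ t, O (p t) ℓ := by
    intro O ℓ
    simp_rw [expand4]
    rw [integral_finset_sum _ (fun p _ => (hW4int p).mul_const _)]
    exact Finset.sum_congr rfl fun p _ => by rw [integral_mul_const]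
  have P2 : ∀ (O : Matrix (Fin k) (Fin k) ℝ) (ℓ : Fin k),
      (∫ ω', (∑ j, Z 0 ω' j * O j ℓ) ^ 2 ∂μ) = ∑ q : Fin 2 → Fin k, m2 q * ∏ t, O (q t) ℓ := by
    intro O ℓ
    simp_rw [expand2]
    rw [integral_finset_sum _ (fun q _ => (hW2int q).mul_const _)]
    exact Finset.sum_congr rfl fun q _ => by rw [integral_mul_const]
  -- orthogonal entries are bounded by one
  have hOent : ∀ (O : Matrix (Fin k) (Fin k) ℝ), Oᵀ * O = 1 → ∀ j ℓ, |O j ℓ| ≤ 1 := by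
    intro O hOrth j ℓ
    have h1 : ∑ j', O j' ℓ * O j' ℓ = 1 := by
      have h := congrFun (congrFun hOrth ℓ) ℓ
      simpa [Matrix.mul_apply, Matrix.transpose_apply, Matrix.one_apply] using h
    have h2 : O j ℓ * O j ℓ ≤ 1 := by
      rw [← h1]
      exact Finset.single_le_sum (f := fun j' => O j' ℓ * O j' ℓ)
        (fun i _ => mul_self_nonneg _) (Finset.mem_univ j)
    exact abs_le_one_iff_mul_self_le_one.mpr h2
  have hprodO4 : ∀ (O : Matrix (Fin k) (Fin k) ℝ), Oᵀ * O = 1 →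
      ∀ (p : Fin 4 → Fin k) (ℓ : Fin k), |∏ t, O (p t) ℓ| ≤ 1 := by
    intro O hOrth p ℓ
    rw [Finset.abs_prod]
    exact Finset.prod_le_one (fun t _ => abs_nonneg _) (fun t _ => hOent O hOrth _ _)
  have hprodO2 : ∀ (O : Matrix (Fin k) (Fin k) ℝ), Oᵀ * O = 1 →
      ∀ (q : Fin 2 → Fin k) (ℓ : Fin k), |∏ t, O (q t) ℓ| ≤ 1 := by
    intro O hOrth q ℓ
    rw [Finset.abs_prod]
    exact Finset.prod_le_one (fun t _ => abs_nonneg _) (fun t _ => hOent O hOrth _ _)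
  -- deterministic bound
  have det : ∀ n : ℕ, 1 ≤ n → ∀ ω : Ω,
      (∀ p, |(1 / (n:ℝ)) * ∑ i ∈ Finset.range n, W4 p i ω - m4 p| < a4 n) →
      (∀ q, |(1 / (n:ℝ)) * ∑ i ∈ Finset.range n, W2 q i ω - m2 q| < a2 n) →
      ∀ O : {O : Matrix (Fin k) (Fin k) ℝ // Oᵀ * O = 1},
        |(∑ ℓ : Fin k,
            ((1 / (n : ℝ)) * ∑ i ∈ Finset.range n,
                (∑ j, Z i ω j * (O : Matrix (Fin k) (Fin k) ℝ) j ℓ) ^ 4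
              - ((1 / (n : ℝ)) * ∑ i ∈ Finset.range n,
                  (∑ j, Z i ω j * (O : Matrix (Fin k) (Fin k) ℝ) j ℓ) ^ 2) ^ 2))
          - (∑ ℓ : Fin k,
              ((∫ ω', (∑ j, Z 0 ω' j * (O : Matrix (Fin k) (Fin k) ℝ) j ℓ) ^ 4 ∂μ)
                - (∫ ω', (∑ j, Z 0 ω' j * (O : Matrix (Fin k) (Fin k) ℝ) j ℓ) ^ 2 ∂μ) ^ 2))|
          ≤ (n : ℝ) ^ (δ - 1/2) := by
    intro n hn ω h4 h2 O
    obtain ⟨O, hOrth⟩ := O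
    simp only []
    have hεn := hεpos n hn
    -- fourth-moment deviation, per column
    have hA : ∀ ℓ : Fin k,
        |(1 / (n:ℝ)) * ∑ i ∈ Finset.range n, (∑ j, Z i ω j * O j ℓ) ^ 4
          - ∫ ω', (∑ j, Z 0 ω' j * O j ℓ) ^ 4 ∂μ| ≤ (k:ℝ)^4 * (c * ε n) := by
      intro ℓ
      rw [S4 n ω O ℓ, P4 O ℓ, ← Finset.sum_sub_distrib]
      simp_rw [← sub_mul]
      calc |∑ p : Fin 4 → Fin k,
              ((1 / (n:ℝ)) * ∑ i ∈ Finset.range n, W4 p i ω - m4 p) * ∏ t, O (p t) ℓ|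
          ≤ ∑ p : Fin 4 → Fin k,
              |((1 / (n:ℝ)) * ∑ i ∈ Finset.range n, W4 p i ω - m4 p) * ∏ t, O (p t) ℓ| :=
            Finset.abs_sum_le_sum_abs _ _
        _ ≤ ∑ _p : Fin 4 → Fin k, c * ε n := by
            apply Finset.sum_le_sum
            intro p _
            rw [abs_mul]
            calc |(1 / (n:ℝ)) * ∑ i ∈ Finset.range n, W4 p i ω - m4 p| * |∏ t, O (p t) ℓ|
                ≤ (c * ε n) * 1 :=
                  mul_le_mul (le_of_lt (h4 p)) (hprodO4 O hOrth p ℓ) (abs_nonneg _)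
                    (by positivity)
              _ = c * ε n := mul_one _
        _ = (k:ℝ)^4 * (c * ε n) := by
            rw [Finset.sum_const, nsmul_eq_mul]
            congr 1
            simp [Fintype.card_fun]
    -- second-moment deviation, per column
    have hB : ∀ ℓ : Fin k,
        |(1 / (n:ℝ)) * ∑ i ∈ Finset.range n, (∑ j, Z i ω j * O j ℓ) ^ 2
          - ∫ ω', (∑ j, Z 0 ω' j * O j ℓ) ^ 2 ∂μ| ≤ (k:ℝ)^2 * a2 n := by
      intro ℓ
      rw [S2 n ω O ℓ, P2 O ℓ, ← Finset.sum_sub_distrib]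
      simp_rw [← sub_mul]
      calc |∑ q : Fin 2 → Fin k,
              ((1 / (n:ℝ)) * ∑ i ∈ Finset.range n, W2 q i ω - m2 q) * ∏ t, O (q t) ℓ|
          ≤ ∑ q : Fin 2 → Fin k,
              |((1 / (n:ℝ)) * ∑ i ∈ Finset.range n, W2 q i ω - m2 q) * ∏ t, O (q t) ℓ| :=
            Finset.abs_sum_le_sum_abs _ _
        _ ≤ ∑ _q : Fin 2 → Fin k, a2 n := by
            apply Finset.sum_le_sum
            intro q _
            rw [abs_mul]
            calc |(1 / (n:ℝ)) * ∑ i ∈ Finset.range n, W2 q i ω - m2 q| * |∏ t, O (q t) ℓ|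
                ≤ a2 n * 1 :=
                  mul_le_mul (le_of_lt (h2 q)) (hprodO2 O hOrth q ℓ) (abs_nonneg _)
                    (le_of_lt (ha2pos n hn))
              _ = a2 n := mul_one _
        _ = (k:ℝ)^2 * a2 n := by
            rw [Finset.sum_const, nsmul_eq_mul]
            congr 1
            simp [Fintype.card_fun]
    -- population second moment is bounded
    have hbM : ∀ ℓ : Fin k, |∫ ω', (∑ j, Z 0 ω' j * O j ℓ) ^ 2 ∂μ| ≤ M2 := by
      intro ℓ
      rw [P2 O ℓ]
      calc |∑ q : Fin 2 → Fin k, m2 q * ∏ t, O (q t) ℓ|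
          ≤ ∑ q : Fin 2 → Fin k, |m2 q * ∏ t, O (q t) ℓ| := Finset.abs_sum_le_sum_abs _ _
        _ ≤ ∑ q : Fin 2 → Fin k, |m2 q| := by
            apply Finset.sum_le_sum
            intro q _
            rw [abs_mul]
            calc |m2 q| * |∏ t, O (q t) ℓ| ≤ |m2 q| * 1 :=
                  mul_le_mul_of_nonneg_left (hprodO2 O hOrth q ℓ) (abs_nonneg _)
              _ = |m2 q| := mul_one _
        _ = M2 := hM2def.symm
    have hk2a2le1 : (k:ℝ)^2 * a2 n ≤ 1 := by
      have h := min_le_right (c * ε n) (1/(k:ℝ)^2)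
      calc (k:ℝ)^2 * a2 n ≤ (k:ℝ)^2 * (1/(k:ℝ)^2) :=
            mul_le_mul_of_nonneg_left h (by positivity)
        _ = 1 := by field_simp
    have hk2a2le : (k:ℝ)^2 * a2 n ≤ (k:ℝ)^2 * (c * ε n) :=
      mul_le_mul_of_nonneg_left (min_le_left _ _) (by positivity)
    -- squared second-moment deviation
    have hBB : ∀ ℓ : Fin k,
        |((1 / (n:ℝ)) * ∑ i ∈ Finset.range n, (∑ j, Z i ω j * O j ℓ) ^ 2) ^ 2
          - (∫ ω', (∑ j, Z 0 ω' j * O j ℓ) ^ 2 ∂μ) ^ 2|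
          ≤ ((k:ℝ)^2 * (c * ε n)) * (1 + 2 * M2) := by
      intro ℓ
      set x := (1 / (n:ℝ)) * ∑ i ∈ Finset.range n, (∑ j, Z i ω j * O j ℓ) ^ 2 with hx
      set y := ∫ ω', (∑ j, Z 0 ω' j * O j ℓ) ^ 2 ∂μ with hy
      have h1 : |x - y| ≤ (k:ℝ)^2 * a2 n := hB ℓ
      have h2' : |y| ≤ M2 := hbM ℓ
      have e : x ^ 2 - y ^ 2 = (x - y) * ((x - y) + 2 * y) := by ring
      rw [e, abs_mul]
      have h3 : |(x - y) + 2 * y| ≤ 1 + 2 * M2 := by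
        calc |(x - y) + 2 * y| ≤ |x - y| + |2 * y| := abs_add_le _ _
          _ = |x - y| + 2 * |y| := by rw [abs_mul, abs_two]
          _ ≤ 1 + 2 * M2 := by
              have := hk2a2le1
              linarith [h1, h2']
      calc |x - y| * |(x - y) + 2 * y| ≤ ((k:ℝ)^2 * a2 n) * (1 + 2 * M2) :=
            mul_le_mul h1 h3 (abs_nonneg _) (by positivity)
        _ ≤ ((k:ℝ)^2 * (c * ε n)) * (1 + 2 * M2) :=
            mul_le_mul_of_nonneg_right hk2a2le (by linarith)
    -- assemble
    rw [← Finset.sum_sub_distrib]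
    calc |∑ ℓ : Fin k,
            (((1 / (n : ℝ)) * ∑ i ∈ Finset.range n, (∑ j, Z i ω j * O j ℓ) ^ 4
              - ((1 / (n : ℝ)) * ∑ i ∈ Finset.range n, (∑ j, Z i ω j * O j ℓ) ^ 2) ^ 2)
            - ((∫ ω', (∑ j, Z 0 ω' j * O j ℓ) ^ 4 ∂μ)
              - (∫ ω', (∑ j, Z 0 ω' j * O j ℓ) ^ 2 ∂μ) ^ 2))|
        ≤ ∑ ℓ : Fin k,
            |(((1 / (n : ℝ)) * ∑ i ∈ Finset.range n, (∑ j, Z i ω j * O j ℓ) ^ 4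
              - ((1 / (n : ℝ)) * ∑ i ∈ Finset.range n, (∑ j, Z i ω j * O j ℓ) ^ 2) ^ 2)
            - ((∫ ω', (∑ j, Z 0 ω' j * O j ℓ) ^ 4 ∂μ)
              - (∫ ω', (∑ j, Z 0 ω' j * O j ℓ) ^ 2 ∂μ) ^ 2))| := Finset.abs_sum_le_sum_abs _ _
      _ ≤ ∑ _ℓ : Fin k, ((k:ℝ)^4 * (c * ε n) + ((k:ℝ)^2 * (c * ε n)) * (1 + 2 * M2)) := by
          apply Finset.sum_le_sum
          intro ℓ _
          have e : ((1 / (n : ℝ)) * ∑ i ∈ Finset.range n, (∑ j, Z i ω j * O j ℓ) ^ 4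
              - ((1 / (n : ℝ)) * ∑ i ∈ Finset.range n, (∑ j, Z i ω j * O j ℓ) ^ 2) ^ 2)
            - ((∫ ω', (∑ j, Z 0 ω' j * O j ℓ) ^ 4 ∂μ)
              - (∫ ω', (∑ j, Z 0 ω' j * O j ℓ) ^ 2 ∂μ) ^ 2)
            = ((1 / (n : ℝ)) * ∑ i ∈ Finset.range n, (∑ j, Z i ω j * O j ℓ) ^ 4
                - ∫ ω', (∑ j, Z 0 ω' j * O j ℓ) ^ 4 ∂μ)
              - (((1 / (n : ℝ)) * ∑ i ∈ Finset.range n, (∑ j, Z i ω j * O j ℓ) ^ 2) ^ 2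
                - (∫ ω', (∑ j, Z 0 ω' j * O j ℓ) ^ 2 ∂μ) ^ 2) := by ring
          rw [e]
          calc |_ - _| ≤ _ + _ := abs_sub _ _
            _ ≤ (k:ℝ)^4 * (c * ε n) + ((k:ℝ)^2 * (c * ε n)) * (1 + 2 * M2) :=
                add_le_add (hA ℓ) (hBB ℓ)
      _ = (k:ℝ) * ((k:ℝ)^4 * (c * ε n) + ((k:ℝ)^2 * (c * ε n)) * (1 + 2 * M2)) := by
          rw [Finset.sum_const, nsmul_eq_mul]
          simp
      _ = ε n * (c * K) := by rw [hKdef]; ring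
      _ ≤ ε n := by
          have hcK : c * K ≤ 1 := by
            rw [hcdef]
            rw [div_mul_eq_mul_div, one_mul, div_le_one (by linarith)]
            linarith
          calc ε n * (c * K) ≤ ε n * 1 := mul_le_mul_of_nonneg_left hcK (hεnn n)
            _ = ε n := mul_one _
  -- union bound and conclusion
  have hbound : ∀ n : ℕ, 1 ≤ n →
      μ {ω |
          (⨆ O : {O : Matrix (Fin k) (Fin k) ℝ // Oᵀ * O = 1},
            |(∑ ℓ : Fin k,
                ((1 / (n : ℝ)) * ∑ i ∈ Finset.range n,
                    (∑ j, Z i ω j * (O : Matrix (Fin k) (Fin k) ℝ) j ℓ) ^ 4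
                  - ((1 / (n : ℝ)) * ∑ i ∈ Finset.range n,
                      (∑ j, Z i ω j * (O : Matrix (Fin k) (Fin k) ℝ) j ℓ) ^ 2) ^ 2))
              - (∑ ℓ : Fin k,
                  ((∫ ω', (∑ j, Z 0 ω' j * (O : Matrix (Fin k) (Fin k) ℝ) j ℓ) ^ 4 ∂μ)
                    - (∫ ω', (∑ j, Z 0 ω' j * (O : Matrix (Fin k) (Fin k) ℝ) j ℓ) ^ 2 ∂μ) ^ 2))|)
            > (n : ℝ) ^ (δ - 1 / 2)}
        ≤ (∑ p : Fin 4 → Fin k,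
            μ {ω | a4 n ≤ |(1 / (n:ℝ)) * ∑ i ∈ Finset.range n, W4 p i ω - m4 p|})
          + ∑ q : Fin 2 → Fin k,
            μ {ω | a2 n ≤ |(1 / (n:ℝ)) * ∑ i ∈ Finset.range n, W2 q i ω - m2 q|} := by
    intro n hn
    have hsub : {ω |
          (⨆ O : {O : Matrix (Fin k) (Fin k) ℝ // Oᵀ * O = 1},
            |(∑ ℓ : Fin k,
                ((1 / (n : ℝ)) * ∑ i ∈ Finset.range n,
                    (∑ j, Z i ω j * (O : Matrix (Fin k) (Fin k) ℝ) j ℓ) ^ 4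
                  - ((1 / (n : ℝ)) * ∑ i ∈ Finset.range n,
                      (∑ j, Z i ω j * (O : Matrix (Fin k) (Fin k) ℝ) j ℓ) ^ 2) ^ 2))
              - (∑ ℓ : Fin k,
                  ((∫ ω', (∑ j, Z 0 ω' j * (O : Matrix (Fin k) (Fin k) ℝ) j ℓ) ^ 4 ∂μ)
                    - (∫ ω', (∑ j, Z 0 ω' j * (O : Matrix (Fin k) (Fin k) ℝ) j ℓ) ^ 2 ∂μ) ^ 2))|)
            > (n : ℝ) ^ (δ - 1 / 2)}
        ⊆ (⋃ p : Fin 4 → Fin k,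
            {ω | a4 n ≤ |(1 / (n:ℝ)) * ∑ i ∈ Finset.range n, W4 p i ω - m4 p|})
          ∪ ⋃ q : Fin 2 → Fin k,
            {ω | a2 n ≤ |(1 / (n:ℝ)) * ∑ i ∈ Finset.range n, W2 q i ω - m2 q|} := by
      intro ω hω
      by_contra hnot
      simp only [Set.mem_union, Set.mem_iUnion, Set.mem_setOf_eq, not_or, not_exists,
        not_le] at hnot
      obtain ⟨hn4, hn2⟩ := hnot
      have hle := det n hn ω hn4 hn2
      have hsup : (⨆ O : {O : Matrix (Fin k) (Fin k) ℝ // Oᵀ * O = 1},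
          |(∑ ℓ : Fin k,
              ((1 / (n : ℝ)) * ∑ i ∈ Finset.range n,
                  (∑ j, Z i ω j * (O : Matrix (Fin k) (Fin k) ℝ) j ℓ) ^ 4
                - ((1 / (n : ℝ)) * ∑ i ∈ Finset.range n,
                    (∑ j, Z i ω j * (O : Matrix (Fin k) (Fin k) ℝ) j ℓ) ^ 2) ^ 2))
            - (∑ ℓ : Fin k,
                ((∫ ω', (∑ j, Z 0 ω' j * (O : Matrix (Fin k) (Fin k) ℝ) j ℓ) ^ 4 ∂μ)
                  - (∫ ω', (∑ j, Z 0 ω' j * (O : Matrix (Fin k) (Fin k) ℝ) j ℓ) ^ 2 ∂μ) ^ 2))|)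
          ≤ (n : ℝ) ^ (δ - 1 / 2) := ciSup_le fun O => hle O
      exact absurd hω (not_lt.mpr hsup)
    calc μ _ ≤ μ ((⋃ p : Fin 4 → Fin k,
            {ω | a4 n ≤ |(1 / (n:ℝ)) * ∑ i ∈ Finset.range n, W4 p i ω - m4 p|})
          ∪ ⋃ q : Fin 2 → Fin k,
            {ω | a2 n ≤ |(1 / (n:ℝ)) * ∑ i ∈ Finset.range n, W2 q i ω - m2 q|}) :=
          measure_mono hsub
      _ ≤ μ (⋃ p : Fin 4 → Fin k,
            {ω | a4 n ≤ |(1 / (n:ℝ)) * ∑ i ∈ Finset.range n, W4 p i ω - m4 p|})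
          + μ (⋃ q : Fin 2 → Fin k,
            {ω | a2 n ≤ |(1 / (n:ℝ)) * ∑ i ∈ Finset.range n, W2 q i ω - m2 q|}) :=
          measure_union_le _ _
      _ ≤ _ := add_le_add (measure_iUnion_fintype_le _ _) (measure_iUnion_fintype_le _ _)
  have hg : Tendsto (fun n : ℕ =>
      (∑ p : Fin 4 → Fin k,
          μ {ω | a4 n ≤ |(1 / (n:ℝ)) * ∑ i ∈ Finset.range n, W4 p i ω - m4 p|})
        + ∑ q : Fin 2 → Fin k,
          μ {ω | a2 n ≤ |(1 / (n:ℝ)) * ∑ i ∈ Finset.range n, W2 q i ω - m2 q|})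
      atTop (nhds 0) := by
    have hg4 : Tendsto (fun n : ℕ => ∑ p : Fin 4 → Fin k,
        μ {ω | a4 n ≤ |(1 / (n:ℝ)) * ∑ i ∈ Finset.range n, W4 p i ω - m4 p|}) atTop (nhds 0) := by
      have := tendsto_finset_sum (Finset.univ : Finset (Fin 4 → Fin k)) (fun p _ => hT4 p)
      simpa using this
    have hg2 : Tendsto (fun n : ℕ => ∑ q : Fin 2 → Fin k,
        μ {ω | a2 n ≤ |(1 / (n:ℝ)) * ∑ i ∈ Finset.range n, W2 q i ω - m2 q|}) atTop (nhds 0) := by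
      have := tendsto_finset_sum (Finset.univ : Finset (Fin 2 → Fin k)) (fun q _ => hT2 q)
      simpa using this
    simpa using hg4.add hg2
  apply tendsto_of_tendsto_of_tendsto_of_le_of_le' tendsto_const_nhds hg
  · exact Filter.Eventually.of_forall fun n => zero_le
  · filter_upwards [Filter.eventually_ge_atTop 1] with n hn using hbound n hn
end

section
/- Let z = (z_1, …, z_k) be a random vector whose coordinates are mutually independent with E[z_i] = 0, E[z_i^2] = 1, and E[z_i^4] < ∞ for each i. Then for every orthogonal matrix Q ∈ O(k), Σ_{j=1}^k E[ (Σ_{i=1}^k z_i·Q_{ij})^4 ] = Σ_{i=1}^k (E[z_i^4] − 3)·(Σ_{j=1}^k Q_{ij}^4) + 3k. -/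
open MeasureTheory ProbabilityTheory Matrix

private lemma integrable_pow_le_four {Ω : Type*} [MeasurableSpace Ω]
    (μ : Measure Ω) [IsProbabilityMeasure μ]
    {f : Ω → ℝ} (hf : Measurable f)
    (h4 : Integrable (fun ω => f ω ^ 4) μ) {p : ℕ} (hp : p ≤ 4) :
    Integrable (fun ω => f ω ^ p) μ := by
  refine Integrable.mono' (g := fun ω => 1 + f ω ^ 4)
    ((integrable_const 1).add h4) (hf.pow_const p).aestronglyMeasurable ?_
  filter_upwards with ω
  have h40 : (0:ℝ) ≤ f ω ^ 4 := by positivity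
  rw [Real.norm_eq_abs, abs_pow]
  rcases le_total (|f ω|) 1 with h | h
  · have : |f ω| ^ p ≤ 1 := pow_le_one₀ (abs_nonneg _) h
    linarith
  · have h1 : |f ω| ^ p ≤ |f ω| ^ 4 := pow_le_pow_right₀ h hp
    have h2 : |f ω| ^ 4 = f ω ^ 4 := by
      rw [pow_abs, abs_of_nonneg h40]
    linarith

private lemma key_moments {Ω : Type*} [MeasurableSpace Ω]
    (μ : Measure Ω) [IsProbabilityMeasure μ]
    {k : ℕ} (z : Fin k → Ω → ℝ) (hmeas : ∀ i, Measurable (z i))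
    (hindep : iIndepFun z μ)
    (hmean : ∀ i, (∫ ω, z i ω ∂μ) = 0)
    (hvar : ∀ i, (∫ ω, (z i ω) ^ 2 ∂μ) = 1)
    (hmom4 : ∀ i, Integrable (fun ω => (z i ω) ^ 4) μ)
    (a : Fin k → ℝ) (s : Finset (Fin k)) :
    Integrable (fun ω => (∑ i ∈ s, a i * z i ω) ^ 4) μ ∧
    (∫ ω, (∑ i ∈ s, a i * z i ω) ∂μ) = 0 ∧
    (∫ ω, (∑ i ∈ s, a i * z i ω) ^ 2 ∂μ) = ∑ i ∈ s, (a i) ^ 2 ∧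
    (∫ ω, (∑ i ∈ s, a i * z i ω) ^ 4 ∂μ)
      = ∑ i ∈ s, (a i) ^ 4 * (∫ ω, (z i ω) ^ 4 ∂μ)
        + 3 * ((∑ i ∈ s, (a i) ^ 2) ^ 2 - ∑ i ∈ s, (a i) ^ 4) := by
  refine Finset.induction_on s ?_ ?_
  · simp
  · intro i s hi ih
    obtain ⟨hS4, hS1, hS2, hS4v⟩ := ih
    set S : Ω → ℝ := fun ω => ∑ j ∈ s, a j * z j ω with hSdef
    have hSmeas : Measurable S :=
      Finset.measurable_sum s fun j _ => (hmeas j).const_mul (a j)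
    have hSp : ∀ p : ℕ, p ≤ 4 → Integrable (fun ω => S ω ^ p) μ :=
      fun p hp => integrable_pow_le_four μ hSmeas hS4 hp
    have hzp : ∀ p : ℕ, p ≤ 4 → Integrable (fun ω => z i ω ^ p) μ :=
      fun p hp => integrable_pow_le_four μ (hmeas i) (hmom4 i) hp
    have base : IndepFun S (z i) μ := by
      have h := hindep.indepFun_finset s {i} (Finset.disjoint_singleton_right.mpr hi) hmeas
      have e1 : (fun v : (↥s → ℝ) => ∑ j : ↥s, a j.1 * v j) ∘ (fun ω (j : ↥s) => z j.1 ω) = S := by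
        funext ω
        exact Finset.sum_coe_sort s fun j => a j * z j ω
      have e2 : (fun v : (↥({i} : Finset (Fin k)) → ℝ) => v ⟨i, Finset.mem_singleton_self i⟩)
          ∘ (fun ω (j : ↥({i} : Finset (Fin k))) => z j.1 ω) = z i := rfl
      rw [← e1, ← e2]
      exact h.comp (by fun_prop)
        (measurable_pi_apply _)
    have indep : ∀ p q : ℕ, IndepFun (fun ω => S ω ^ p) (fun ω => z i ω ^ q) μ :=
      fun p q => base.comp (measurable_id.pow_const p) (measurable_id.pow_const q)
    have hmul : ∀ p q : ℕ, p ≤ 4 → q ≤ 4 → Integrable (fun ω => S ω ^ p * z i ω ^ q) μ :=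
      fun p q hp hq => (indep p q).integrable_mul (hSp p hp) (hzp q hq)
    have hmulval : ∀ p q : ℕ, p ≤ 4 → q ≤ 4 →
        (∫ ω, S ω ^ p * z i ω ^ q ∂μ) = (∫ ω, S ω ^ p ∂μ) * (∫ ω, z i ω ^ q ∂μ) :=
      fun p q hp hq => (indep p q).integral_mul_eq_mul_integral (hSp p hp).aestronglyMeasurable (hzp q hq).aestronglyMeasurable
    have hSint : Integrable S μ := by simpa using hSp 1 (by norm_num)
    have hzint : Integrable (z i) μ := by simpa using hzp 1 (by norm_num)
    have hsum : ∀ ω, (∑ j ∈ insert i s, a j * z j ω) = S ω + a i * z i ω := by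
      intro ω
      rw [Finset.sum_insert hi]
      simp only [hSdef]
      ring
    simp only [hsum]
    have e4 : ∀ ω : Ω, (S ω + a i * z i ω) ^ 4
        = S ω ^ 4 + (a i) ^ 4 * z i ω ^ 4 + (4 * a i) * (S ω ^ 3 * z i ω ^ 1)
          + (6 * (a i) ^ 2) * (S ω ^ 2 * z i ω ^ 2) + (4 * (a i) ^ 3) * (S ω ^ 1 * z i ω ^ 3) := by
      intro ω; ring
    have hA := hSp 4 le_rfl
    have hB := (hzp 4 le_rfl).const_mul ((a i) ^ 4)
    have hC := (hmul 3 1 (by norm_num) (by norm_num)).const_mul (4 * a i)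
    have hD := (hmul 2 2 (by norm_num) (by norm_num)).const_mul (6 * (a i) ^ 2)
    have hE := (hmul 1 3 (by norm_num) (by norm_num)).const_mul (4 * (a i) ^ 3)
    have int4 : Integrable (fun ω => (S ω + a i * z i ω) ^ 4) μ := by
      simp only [e4]
      exact ((((hA.add hB).add hC).add hD).add hE)
    refine ⟨int4, ?_, ?_, ?_⟩
    · rw [integral_add hSint (hzint.const_mul _), integral_const_mul, hS1, hmean i]
      ring
    · have e2pt : ∀ ω : Ω, (S ω + a i * z i ω) ^ 2
          = S ω ^ 2 + (2 * a i) * (S ω ^ 1 * z i ω ^ 1) + (a i) ^ 2 * z i ω ^ 2 := by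
        intro ω; ring
      simp only [e2pt]
      have hP : Integrable (fun ω => S ω ^ 2 + 2 * a i * (S ω ^ 1 * z i ω ^ 1)) μ := by
        exact (hSp 2 (by norm_num)).add
          ((hmul 1 1 (by norm_num) (by norm_num)).const_mul (2 * a i))
      rw [integral_add hP ((hzp 2 (by norm_num)).const_mul ((a i) ^ 2)),
        integral_add (hSp 2 (by norm_num))
          ((hmul 1 1 (by norm_num) (by norm_num)).const_mul (2 * a i)),
        integral_const_mul, integral_const_mul,
        hmulval 1 1 (by norm_num) (by norm_num)]
      simp only [pow_one]
      rw [hS2, hS1, hvar i, Finset.sum_insert hi]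
      ring
    · simp only [e4]
      have hP3 : Integrable (fun ω => S ω ^ 4 + a i ^ 4 * z i ω ^ 4
          + 4 * a i * (S ω ^ 3 * z i ω ^ 1) + 6 * a i ^ 2 * (S ω ^ 2 * z i ω ^ 2)) μ := by
        exact ((hA.add hB).add hC).add hD
      have hP2 : Integrable (fun ω => S ω ^ 4 + a i ^ 4 * z i ω ^ 4
          + 4 * a i * (S ω ^ 3 * z i ω ^ 1)) μ := by
        exact (hA.add hB).add hC
      have hP1 : Integrable (fun ω => S ω ^ 4 + a i ^ 4 * z i ω ^ 4) μ := by
        exact hA.add hB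
      rw [integral_add hP3 hE,
        integral_add hP2 hD,
        integral_add hP1 hC,
        integral_add hA hB,
        integral_const_mul, integral_const_mul, integral_const_mul, integral_const_mul,
        hmulval 3 1 (by norm_num) (by norm_num),
        hmulval 2 2 (by norm_num) (by norm_num),
        hmulval 1 3 (by norm_num) (by norm_num)]
      simp only [pow_one]
      rw [hS4v, hS2, hS1, hmean i, hvar i,
        Finset.sum_insert hi, Finset.sum_insert hi, Finset.sum_insert hi]
      ring

/-- Fourth-moment expansion under an orthogonal rotation of a random vector with
independent standardized coordinates:
`Σⱼ E[(Σᵢ zᵢ Q_{ij})⁴] = Σᵢ (E[zᵢ⁴] − 3)·Σⱼ Q_{ij}⁴ + 3k`. -/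
theorem fourth_moment_rotation_expansion
    {Ω : Type*} [MeasurableSpace Ω] (μ : Measure Ω) [IsProbabilityMeasure μ]
    (k : ℕ) (z : Fin k → Ω → ℝ) (hmeas : ∀ i, Measurable (z i))
    (hindep : iIndepFun z μ)
    (hmean : ∀ i, (∫ ω, z i ω ∂μ) = 0)
    (hvar : ∀ i, (∫ ω, (z i ω) ^ 2 ∂μ) = 1)
    (hmom4 : ∀ i, Integrable (fun ω => (z i ω) ^ 4) μ) :
    ∀ Q : Matrix (Fin k) (Fin k) ℝ, Qᵀ * Q = 1 →
      (∑ j : Fin k, ∫ ω, (∑ i : Fin k, z i ω * Q i j) ^ 4 ∂μ)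
        = (∑ i : Fin k, ((∫ ω, (z i ω) ^ 4 ∂μ) - 3) * (∑ j : Fin k, (Q i j) ^ 4))
          + 3 * (k : ℝ) := by
  intro Q hQ
  have col : ∀ j, ∑ i : Fin k, (Q i j) ^ 2 = 1 := by
    intro j
    have h1 : (Qᵀ * Q) j j = (1 : Matrix (Fin k) (Fin k) ℝ) j j := by rw [hQ]
    simpa [Matrix.mul_apply, Matrix.transpose_apply, Matrix.one_apply_eq, pow_two] using h1
  have hj : ∀ j : Fin k, (∫ ω, (∑ i : Fin k, z i ω * Q i j) ^ 4 ∂μ)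
      = ∑ i : Fin k, ((∫ ω, (z i ω) ^ 4 ∂μ) - 3) * (Q i j) ^ 4 + 3 := by
    intro j
    have hk := (key_moments μ z hmeas hindep hmean hvar hmom4 (fun i => Q i j) Finset.univ).2.2.2
    have hc : ∀ ω, (∑ i : Fin k, z i ω * Q i j) = ∑ i : Fin k, Q i j * z i ω := by
      intro ω; exact Finset.sum_congr rfl fun l _ => mul_comm _ _
    simp only [hc]
    rw [hk, col j, one_pow]
    have hsub : ∑ i : Fin k, ((∫ ω, (z i ω) ^ 4 ∂μ) - 3) * (Q i j) ^ 4
        = ∑ i : Fin k, ((Q i j) ^ 4 * (∫ ω, (z i ω) ^ 4 ∂μ)) - 3 * ∑ i : Fin k, (Q i j) ^ 4 := by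
      rw [Finset.mul_sum, ← Finset.sum_sub_distrib]
      exact Finset.sum_congr rfl fun l _ => by ring
    rw [hsub]
    ring
  calc (∑ j : Fin k, ∫ ω, (∑ i : Fin k, z i ω * Q i j) ^ 4 ∂μ)
      = ∑ j : Fin k, (∑ i : Fin k, ((∫ ω, (z i ω) ^ 4 ∂μ) - 3) * (Q i j) ^ 4 + 3) :=
        Finset.sum_congr rfl fun j _ => hj j
    _ = (∑ j : Fin k, ∑ i : Fin k, ((∫ ω, (z i ω) ^ 4 ∂μ) - 3) * (Q i j) ^ 4)
          + ∑ _j : Fin k, (3 : ℝ) := Finset.sum_add_distrib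
    _ = (∑ i : Fin k, ((∫ ω, (z i ω) ^ 4 ∂μ) - 3) * (∑ j : Fin k, (Q i j) ^ 4))
          + 3 * (k : ℝ) := by
        rw [Finset.sum_comm]
        simp only [← Finset.mul_sum]
        rw [Finset.sum_const, Finset.card_univ, Fintype.card_fin, nsmul_eq_mul]
        ring
end

section
/- Let K_1 and K_2 be real skew-symmetric k × k matrices. Then ‖exp(K_1) − exp(K_2)‖ ≤ ‖K_1 − K_2‖, where exp denotes the matrix exponential and ‖·‖ the spectral norm. -/
open Matrix
open scoped Matrix.Norms.L2Operator

lemma aux_pow_sub_pow {𝔸 : Type*} [NormedRing 𝔸] [NormOneClass 𝔸]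
    (X Y : 𝔸) (M : ℝ) (hX : ‖X‖ ≤ M) (hY : ‖Y‖ ≤ M) :
    ∀ n : ℕ, ‖X ^ n - Y ^ n‖ ≤ n * M ^ (n - 1) * ‖X - Y‖ := by
  have hM : 0 ≤ M := le_trans (norm_nonneg X) hX
  intro n
  induction n with
  | zero => simp
  | succ n ih =>
    have h1 : X ^ (n + 1) - Y ^ (n + 1) = X ^ n * (X - Y) + (X ^ n - Y ^ n) * Y := by
      rw [pow_succ, pow_succ, mul_sub, sub_mul]
      abel
    have hXn : ‖X ^ n‖ ≤ M ^ n :=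
      le_trans (norm_pow_le X n) (pow_le_pow_left₀ (norm_nonneg X) hX n)
    have h2 : (n : ℝ) * M ^ (n - 1) * ‖X - Y‖ * M ≤ n * M ^ n * ‖X - Y‖ := by
      cases n with
      | zero => simp
      | succ m =>
        apply le_of_eq
        rw [Nat.add_sub_cancel]
        rw [pow_succ]
        ring
    calc ‖X ^ (n + 1) - Y ^ (n + 1)‖
        ≤ ‖X ^ n * (X - Y)‖ + ‖(X ^ n - Y ^ n) * Y‖ := by rw [h1]; exact norm_add_le _ _
      _ ≤ ‖X ^ n‖ * ‖X - Y‖ + ‖X ^ n - Y ^ n‖ * ‖Y‖ :=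
          add_le_add (norm_mul_le _ _) (norm_mul_le _ _)
      _ ≤ M ^ n * ‖X - Y‖ + (n * M ^ (n - 1) * ‖X - Y‖) * M := by
          refine add_le_add (mul_le_mul_of_nonneg_right hXn (norm_nonneg _)) ?_
          exact mul_le_mul ih hY (norm_nonneg _)
            (by positivity)
      _ ≤ M ^ n * ‖X - Y‖ + n * M ^ n * ‖X - Y‖ := add_le_add le_rfl h2
      _ = (n + 1 : ℕ) * M ^ ((n + 1) - 1) * ‖X - Y‖ := by
          rw [Nat.add_sub_cancel]; push_cast; ring

lemma aux_exp_sub_exp {𝔸 : Type*} [NormedRing 𝔸] [NormOneClass 𝔸] [NormedAlgebra ℝ 𝔸]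
    [CompleteSpace 𝔸] (X Y : 𝔸) :
    ‖NormedSpace.exp X - NormedSpace.exp Y‖ ≤
      ‖X - Y‖ * Real.exp (max ‖X‖ ‖Y‖) := by
  set M : ℝ := max ‖X‖ ‖Y‖ with hMdef
  have hM : 0 ≤ M := le_trans (norm_nonneg X) (le_max_left _ _)
  set e : ℕ → ℝ := fun n => match n with
    | 0 => 0
    | (m + 1) => M ^ m / m.factorial with he
  have hesum : HasSum (fun n => ‖X - Y‖ * e n) (‖X - Y‖ * Real.exp M) := by
    apply HasSum.mul_left
    have h1 : HasSum (fun n : ℕ => e (n + 1)) (Real.exp M) := by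
      show HasSum (fun n : ℕ => M ^ n / n.factorial) (Real.exp M)
      rw [Real.exp_eq_exp_ℝ, NormedSpace.exp_eq_tsum_div]
      exact (Real.summable_pow_div_factorial M).hasSum
    have h2 : HasSum (fun n => e (n + 1)) (Real.exp M - ∑ i ∈ Finset.range 1, e i) := by
      simpa [he] using h1
    exact (hasSum_nat_add_iff' 1).mp h2
  simp only [NormedSpace.exp_eq_tsum ℝ]
  rw [← Summable.tsum_sub (NormedSpace.expSeries_summable' (𝕂 := ℝ) X) (NormedSpace.expSeries_summable' (𝕂 := ℝ) Y)]
  apply tsum_of_norm_bounded hesum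
  intro n
  have key := aux_pow_sub_pow X Y M (le_max_left _ _) (le_max_right _ _) n
  cases n with
  | zero => simp [he]
  | succ m =>
    calc ‖((m + 1).factorial : ℝ)⁻¹ • X ^ (m+1) - ((m + 1).factorial : ℝ)⁻¹ • Y ^ (m+1)‖
        = ((m + 1).factorial : ℝ)⁻¹ * ‖X ^ (m+1) - Y ^ (m+1)‖ := by
          rw [← smul_sub, norm_smul, Real.norm_eq_abs, abs_of_pos (by positivity)]
      _ ≤ ((m + 1).factorial : ℝ)⁻¹ * ((m+1) * M ^ m * ‖X - Y‖) := by
          gcongr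
          simpa using key
      _ = ‖X - Y‖ * (M ^ m / m.factorial) := by
          rw [Nat.factorial_succ]
          push_cast
          have h1 : ((m:ℝ) + 1) ≠ 0 := by positivity
          have h2 : ((m.factorial :ℝ)) ≠ 0 := by positivity
          field_simp
      _ = ‖X - Y‖ * e (m + 1) := rfl

/-- The matrix exponential is 1-Lipschitz on real skew-symmetric matrices in the
spectral norm: `‖exp(K₁) − exp(K₂)‖ ≤ ‖K₁ − K₂‖`. -/
theorem exp_skew_lipschitz {k : ℕ}
    (K₁ K₂ : Matrix (Fin k) (Fin k) ℝ)
    (h₁ : K₁ᵀ = -K₁) (h₂ : K₂ᵀ = -K₂) :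
    ‖NormedSpace.exp K₁ - NormedSpace.exp K₂‖ ≤ ‖K₁ - K₂‖ := by
  rcases Nat.eq_zero_or_pos k with rfl | hk
  · rw [Subsingleton.elim (NormedSpace.exp K₁) (NormedSpace.exp K₂)]
    simp
  haveI : NeZero k := ⟨hk.ne'⟩
  haveI : NormOneClass (Matrix (Fin k) (Fin k) ℝ) := ⟨CStarRing.norm_one⟩
  have hnorm : ∀ K : Matrix (Fin k) (Fin k) ℝ, Kᵀ = -K → ‖NormedSpace.exp K‖ = 1 := by
    intro K hK
    apply CStarRing.norm_of_mem_unitary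
    letI : NormedAlgebra ℚ (Matrix (Fin k) (Fin k) ℝ) := NormedAlgebra.restrictScalars ℚ ℝ _
    apply NormedSpace.exp_mem_unitary_of_mem_skewAdjoint
    rw [skewAdjoint.mem_iff, Matrix.star_eq_conjTranspose,
      conjTranspose_eq_transpose_of_trivial, hK]
  set C : ℝ := max ‖K₁‖ ‖K₂‖ with hC
  have hC0 : 0 ≤ C := le_trans (norm_nonneg K₁) (le_max_left _ _)
  have main : ∀ n : ℕ, 0 < n →
      ‖NormedSpace.exp K₁ - NormedSpace.exp K₂‖ ≤ ‖K₁ - K₂‖ * Real.exp (C / n) := by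
    intro n hn
    set X := (n : ℝ)⁻¹ • K₁ with hX
    set Y := (n : ℝ)⁻¹ • K₂ with hY
    have hn0 : ((n : ℝ)) ≠ 0 := Nat.cast_ne_zero.mpr hn.ne'
    have hn' : (0:ℝ) < n := Nat.cast_pos.mpr hn
    have hXK : NormedSpace.exp K₁ = (NormedSpace.exp X) ^ n := by
      rw [← Matrix.exp_nsmul]
      congr 1
      rw [hX, ← Nat.cast_smul_eq_nsmul ℝ, smul_smul, mul_inv_cancel₀ hn0, one_smul]
    have hYK : NormedSpace.exp K₂ = (NormedSpace.exp Y) ^ n := by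
      rw [← Matrix.exp_nsmul]
      congr 1
      rw [hY, ← Nat.cast_smul_eq_nsmul ℝ, smul_smul, mul_inv_cancel₀ hn0, one_smul]
    have hXskew : Xᵀ = -X := by rw [hX, Matrix.transpose_smul, h₁, smul_neg]
    have hYskew : Yᵀ = -Y := by rw [hY, Matrix.transpose_smul, h₂, smul_neg]
    have hnX : ‖NormedSpace.exp X‖ = 1 := hnorm X hXskew
    have hnY : ‖NormedSpace.exp Y‖ = 1 := hnorm Y hYskew
    have step1 : ‖NormedSpace.exp K₁ - NormedSpace.exp K₂‖ ≤
        n * ‖NormedSpace.exp X - NormedSpace.exp Y‖ := by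
      rw [hXK, hYK]
      have := aux_pow_sub_pow (NormedSpace.exp X) (NormedSpace.exp Y) 1
        (by rw [hnX]) (by rw [hnY]) n
      simpa using this
    have hXnorm : ‖X‖ ≤ C / n := by
      rw [hX, norm_smul, norm_inv, Real.norm_natCast, div_eq_inv_mul]
      gcongr
      exact le_max_left _ _
    have hYnorm : ‖Y‖ ≤ C / n := by
      rw [hY, norm_smul, norm_inv, Real.norm_natCast, div_eq_inv_mul]
      gcongr
      exact le_max_right _ _
    have step2 : ‖NormedSpace.exp X - NormedSpace.exp Y‖ ≤
        ‖X - Y‖ * Real.exp (C / n) := by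
      refine le_trans (aux_exp_sub_exp X Y) ?_
      gcongr
      exact max_le hXnorm hYnorm
    have hXY : ‖X - Y‖ = ‖K₁ - K₂‖ / n := by
      rw [hX, hY, ← smul_sub, norm_smul, norm_inv, Real.norm_natCast, div_eq_inv_mul]
    calc ‖NormedSpace.exp K₁ - NormedSpace.exp K₂‖
        ≤ n * ‖NormedSpace.exp X - NormedSpace.exp Y‖ := step1
      _ ≤ n * (‖X - Y‖ * Real.exp (C / n)) := by gcongr
      _ = ‖K₁ - K₂‖ * Real.exp (C / n) := by
          rw [hXY]
          field_simp
  have hlim : Filter.Tendsto (fun n : ℕ => ‖K₁ - K₂‖ * Real.exp (C / n))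
      Filter.atTop (nhds (‖K₁ - K₂‖)) := by
    have h1 : Filter.Tendsto (fun n : ℕ => C / (n:ℝ)) Filter.atTop (nhds 0) :=
      tendsto_const_div_atTop_nhds_zero_nat C
    have h2 := (Real.continuous_exp.tendsto 0).comp h1
    rw [Real.exp_zero] at h2
    have h3 := h2.const_mul ‖K₁ - K₂‖
    simpa using h3
  refine ge_of_tendsto hlim ?_
  filter_upwards [Filter.eventually_gt_atTop 0] with n hn
  exact main n hn
end

section
/- Let W be a Poisson random variable with parameter λ > 0. Then for every integer m ≥ 2, E[(W − λ)^m] ≤ (m − 1)! · max{ λ^{⌊m/2⌋}, λ }. -/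
open MeasureTheory Finset

namespace PoissonCM

noncomputable def p (lam : ℝ) (j : ℕ) : ℝ :=
  Real.exp (-lam) * lam ^ j / (j.factorial : ℝ)

lemma p_pos {lam : ℝ} (hlam : 0 < lam) (j : ℕ) : 0 < p lam j := by
  have h : (0:ℝ) < (j.factorial : ℝ) := by exact_mod_cast j.factorial_pos
  unfold p
  positivity

lemma p_succ (lam : ℝ) (j : ℕ) :
    ((j : ℝ) + 1) * p lam (j + 1) = lam * p lam j := by
  have h1 : ((j.factorial : ℝ)) ≠ 0 := Nat.cast_ne_zero.mpr j.factorial_ne_zero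
  have h2 : ((j:ℝ) + 1) ≠ 0 := by positivity
  unfold p
  rw [Nat.factorial_succ]
  push_cast
  field_simp
  ring

lemma sum_p {lam : ℝ} (hlam : 0 < lam) : ∑' j, p lam j = 1 := by
  have h : (fun j : ℕ => p lam j)
      = fun j : ℕ => Real.exp (-lam) * (lam ^ j / (j.factorial : ℝ)) := by
    funext j; unfold p; ring
  rw [h, tsum_mul_left]
  have hexp : ∑' j : ℕ, lam ^ j / (j.factorial : ℝ) = Real.exp lam := by
    rw [Real.exp_eq_exp_ℝ, NormedSpace.exp_eq_tsum_div]
  rw [hexp, ← Real.exp_add]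
  simp

lemma summable_base {lam : ℝ} (hlam : 0 < lam) (M : ℕ) :
    Summable (fun j : ℕ => ((j : ℝ) + 1) ^ M * p lam j) := by
  refine summable_of_ratio_norm_eventually_le (r := 1/2) (by norm_num) ?_
  filter_upwards [Filter.eventually_ge_atTop (⌈2 ^ (M + 1) * lam⌉₊)] with j hj
  have hp := p_pos hlam j
  have hp1 := p_pos hlam (j + 1)
  have ha : (0:ℝ) < (j:ℝ) + 1 := by positivity
  have hps : p lam (j + 1) = lam * p lam j / ((j:ℝ) + 1) := by
    rw [eq_div_iff ha.ne']
    linarith [p_succ lam j]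
  have hj' : 2 ^ (M + 1) * lam ≤ (j:ℝ) + 1 := by
    calc 2 ^ (M+1) * lam ≤ (⌈2 ^ (M + 1) * lam⌉₊ : ℝ) := Nat.le_ceil _
    _ ≤ (j:ℝ) := by exact_mod_cast hj
    _ ≤ (j:ℝ) + 1 := by linarith
  rw [Real.norm_of_nonneg (by positivity), Real.norm_of_nonneg (by positivity)]
  push_cast
  rw [hps]
  have h1 : ((j:ℝ) + 1 + 1) ^ M ≤ 2 ^ M * ((j:ℝ) + 1) ^ M := by
    rw [← mul_pow]
    exact pow_le_pow_left₀ (by positivity) (by linarith) M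
  have h2 : lam / ((j:ℝ)+1) ≤ 1 / 2 ^ (M+1) := by
    rw [div_le_div_iff₀ ha (by positivity)]
    nlinarith [hj']
  calc ((j:ℝ)+1+1)^M * (lam * p lam j / ((j:ℝ)+1))
      = ((j:ℝ)+1+1)^M * (lam / ((j:ℝ)+1)) * p lam j := by ring
    _ ≤ (2^M * ((j:ℝ)+1)^M) * (1 / 2^(M+1)) * p lam j := by
        apply mul_le_mul_of_nonneg_right _ hp.le
        apply mul_le_mul h1 h2 (by positivity) (by positivity)
    _ = 1/2 * (((j:ℝ)+1)^M * p lam j) := by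
        rw [pow_succ]
        field_simp

lemma summable_aux {lam : ℝ} (hlam : 0 < lam) {f : ℕ → ℝ} {M : ℕ} {C : ℝ}
    (h : ∀ j, |f j| ≤ C * ((j : ℝ) + 1) ^ M) :
    Summable (fun j => f j * p lam j) := by
  refine Summable.of_norm (Summable.of_nonneg_of_le (fun j => norm_nonneg _) (fun j => ?_)
    ((summable_base hlam M).mul_left C))
  have hp := (p_pos hlam j).le
  calc ‖f j * p lam j‖ = |f j| * p lam j := by
        rw [Real.norm_eq_abs, abs_mul, abs_of_nonneg hp]
    _ ≤ (C * ((j:ℝ)+1)^M) * p lam j := mul_le_mul_of_nonneg_right (h j) hp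
    _ = C * (((j:ℝ)+1)^M * p lam j) := by ring

lemma abs_shift_pow_le {lam : ℝ} (hlam : 0 < lam) {a : ℝ} (ha0 : 0 ≤ a) (ha1 : a ≤ 1)
    (m : ℕ) (j : ℕ) :
    |((j:ℝ) + a - lam) ^ m| ≤ (1 + lam) ^ m * ((j:ℝ) + 1) ^ m := by
  rw [abs_pow, ← mul_pow]
  apply pow_le_pow_left₀ (abs_nonneg _) _ m
  have hj : (0:ℝ) ≤ (j:ℝ) := Nat.cast_nonneg j
  have hlj : 0 ≤ lam * (j:ℝ) := mul_nonneg hlam.le hj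
  rw [abs_le]
  constructor <;> nlinarith

lemma summable_S {lam : ℝ} (hlam : 0 < lam) (m : ℕ) :
    Summable (fun j : ℕ => ((j:ℝ) - lam) ^ m * p lam j) := by
  refine summable_aux hlam (M := m) (C := (1+lam)^m) (fun j => ?_)
  simpa using abs_shift_pow_le hlam le_rfl zero_le_one m j

lemma summable_S1 {lam : ℝ} (hlam : 0 < lam) (m : ℕ) :
    Summable (fun j : ℕ => ((j:ℝ) + 1 - lam) ^ m * p lam j) := by
  refine summable_aux hlam (M := m) (C := (1+lam)^m) (fun j => ?_)
  exact abs_shift_pow_le hlam zero_le_one le_rfl m j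

lemma summable_J {lam : ℝ} (hlam : 0 < lam) (m : ℕ) :
    Summable (fun j : ℕ => (j:ℝ) * ((j:ℝ) - lam) ^ m * p lam j) := by
  refine summable_aux hlam (M := m+1) (C := (1+lam)^m) (fun j => ?_)
  have hj : (0:ℝ) ≤ (j:ℝ) := Nat.cast_nonneg j
  have h1 := abs_shift_pow_le hlam (a := 0) le_rfl zero_le_one m j
  simp only [add_zero] at h1
  calc |(j:ℝ) * ((j:ℝ) - lam) ^ m| = (j:ℝ) * |((j:ℝ) - lam) ^ m| := by
        rw [abs_mul, abs_of_nonneg hj]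
    _ ≤ ((j:ℝ)+1) * ((1 + lam) ^ m * ((j:ℝ) + 1) ^ m) := by
        apply mul_le_mul (by linarith) h1 (abs_nonneg _) (by linarith)
    _ = (1 + lam) ^ m * ((j:ℝ) + 1) ^ (m+1) := by ring

noncomputable def S (lam : ℝ) (m : ℕ) : ℝ := ∑' j : ℕ, ((j:ℝ) - lam) ^ m * p lam j

lemma S_zero {lam : ℝ} (hlam : 0 < lam) : S lam 0 = 1 := by
  unfold S
  simpa using sum_p hlam

lemma S_rec {lam : ℝ} (hlam : 0 < lam) (m : ℕ) :
    S lam (m+1) = lam * ∑ k ∈ range m, (m.choose k : ℝ) * S lam k := by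
  have hshift : (∑' j : ℕ, (j:ℝ) * ((j:ℝ) - lam) ^ m * p lam j)
      = lam * ∑' j : ℕ, ((j:ℝ) + 1 - lam) ^ m * p lam j := by
    rw [Summable.tsum_eq_zero_add (summable_J hlam m)]
    simp only [Nat.cast_zero, zero_mul, zero_add, Nat.cast_add, Nat.cast_one]
    rw [← tsum_mul_left]
    congr 1
    funext j
    have := p_succ lam j
    calc ((j:ℝ) + 1) * ((j:ℝ) + 1 - lam) ^ m * p lam (j+1)
        = ((j:ℝ) + 1 - lam) ^ m * (((j:ℝ) + 1) * p lam (j+1)) := by ring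
      _ = ((j:ℝ) + 1 - lam) ^ m * (lam * p lam j) := by rw [this]
      _ = lam * (((j:ℝ) + 1 - lam) ^ m * p lam j) := by ring
  have hsplit : S lam (m+1)
      = (∑' j : ℕ, (j:ℝ) * ((j:ℝ) - lam) ^ m * p lam j)
        - lam * ∑' j : ℕ, ((j:ℝ) - lam) ^ m * p lam j := by
    unfold S
    rw [← tsum_mul_left, ← Summable.tsum_sub (summable_J hlam m)
      ((summable_S hlam m).mul_left lam)]
    congr 1
    funext j
    ring
  rw [hsplit, hshift, ← mul_sub, ← Summable.tsum_sub (summable_S1 hlam m) (summable_S hlam m)]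
  congr 1
  have hexp : ∀ j : ℕ, ((j:ℝ) + 1 - lam) ^ m * p lam j - ((j:ℝ) - lam) ^ m * p lam j
      = ∑ k ∈ range m, (m.choose k : ℝ) * (((j:ℝ) - lam) ^ k * p lam j) := by
    intro j
    have hb : ((j:ℝ) + 1 - lam) ^ m
        = ∑ k ∈ range (m+1), ((j:ℝ) - lam) ^ k * (1:ℝ) ^ (m-k) * (m.choose k : ℝ) := by
      rw [← add_pow]
      ring_nf
    rw [hb, Finset.sum_range_succ]
    simp only [one_pow, mul_one, Nat.choose_self, Nat.cast_one]
    rw [add_mul, add_sub_cancel_right, Finset.sum_mul]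
    apply Finset.sum_congr rfl
    intro k _
    ring
  calc (∑' j : ℕ, (((j:ℝ) + 1 - lam) ^ m * p lam j - ((j:ℝ) - lam) ^ m * p lam j))
      = ∑' j : ℕ, ∑ k ∈ range m, (m.choose k : ℝ) * (((j:ℝ) - lam) ^ k * p lam j) := by
        congr 1; funext j; exact hexp j
    _ = ∑ k ∈ range m, ∑' j : ℕ, (m.choose k : ℝ) * (((j:ℝ) - lam) ^ k * p lam j) := by
        refine Summable.tsum_finsetSum (fun k _ => ?_)
        exact (summable_S hlam k).mul_left _
    _ = ∑ k ∈ range m, (m.choose k : ℝ) * S lam k := by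
        refine Finset.sum_congr rfl (fun k _ => ?_)
        rw [tsum_mul_left]
        rfl

lemma S_one {lam : ℝ} (hlam : 0 < lam) : S lam 1 = 0 := by
  have := S_rec hlam 0
  simpa using this

lemma two_pow_le_factorial_succ (i : ℕ) : 2 ^ i ≤ (i+1).factorial := by
  induction i with
  | zero => simp
  | succ n ih =>
    calc 2 ^ (n+1) = 2 * 2 ^ n := by ring
    _ ≤ 2 * (n+1).factorial := by omega
    _ ≤ (n+2) * (n+1).factorial := by
        apply Nat.mul_le_mul_right
        omega
    _ = (n+2).factorial := (Nat.factorial_succ (n+1)).symm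

lemma key (n : ℕ) :
    (1:ℝ) + ∑ k ∈ Ico 2 n, (n.choose k : ℝ) * ((k-1).factorial : ℝ)
      ≤ (n.factorial : ℝ) := by
  rcases lt_or_ge n 2 with h2 | h2
  · interval_cases n <;> simp
  · have hstep : ∀ k ∈ Ico 2 n, (n.choose k : ℝ) * ((k-1).factorial : ℝ)
        ≤ ((n.factorial : ℝ)/2) * (1/2)^(n-1-k) := by
      intro k hk
      rw [mem_Ico] at hk
      obtain ⟨hk2, hkn⟩ := hk
      have hch : (n.choose k) * (k.factorial) * ((n-k).factorial) = n.factorial :=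
        Nat.choose_mul_factorial_mul_factorial hkn.le
      have hkf : k.factorial = k * (k-1).factorial := by
        obtain ⟨k', rfl⟩ : ∃ k', k = k' + 1 := ⟨k-1, by omega⟩
        simp [Nat.factorial_succ]
      have hpow : 2 ^ (n-k) ≤ k * ((n-k).factorial) := by
        have h1 : 2 ^ (n-k-1) ≤ (n-k).factorial := by
          have h := two_pow_le_factorial_succ (n-k-1)
          have : n-k-1+1 = n-k := by omega
          rwa [this] at h
        calc 2 ^ (n-k) = 2 * 2 ^ (n-k-1) := by
              rw [← pow_succ']
              congr 1
              omega
        _ ≤ k * ((n-k).factorial) := Nat.mul_le_mul hk2 h1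
      have hch' : (n.choose k : ℝ) * ((k-1).factorial : ℝ)
          * ((k : ℝ) * (((n-k).factorial : ℝ))) = (n.factorial : ℝ) := by
        rw [hkf] at hch
        push_cast [← hch]
        ring
      have hd : (0:ℝ) < (k:ℝ) * (((n-k).factorial : ℝ)) := by
        have hk0 : (0:ℝ) < (k:ℝ) := by exact_mod_cast (by omega : 0 < k)
        have h2 : (0:ℝ) < (((n-k).factorial : ℝ)) := by exact_mod_cast (n-k).factorial_pos
        positivity
      have heq : (n.choose k : ℝ) * ((k-1).factorial : ℝ)
          = (n.factorial : ℝ) / ((k : ℝ) * (((n-k).factorial : ℝ))) := by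
        field_simp [← hch']
        rw [← hch']
        ring
      rw [heq]
      have hpow' : (2:ℝ) ^ (n-k) ≤ (k : ℝ) * (((n-k).factorial : ℝ)) := by
        exact_mod_cast hpow
      have h2nk : (0:ℝ) < (2:ℝ)^(n-k) := by positivity
      calc (n.factorial : ℝ) / ((k : ℝ) * (((n-k).factorial : ℝ)))
          ≤ (n.factorial : ℝ) / (2:ℝ)^(n-k) := by
            apply div_le_div_of_nonneg_left (by positivity) h2nk hpow'
        _ = ((n.factorial : ℝ)/2) * (1/2)^(n-1-k) := by
            have hnk : n - k = (n-1-k) + 1 := by omega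
            rw [hnk, pow_succ, one_div, inv_pow, div_eq_mul_inv, div_eq_mul_inv, mul_inv]
            ring
    have hgeom : ∑ k ∈ Ico 2 n, ((1:ℝ)/2)^(n-1-k) = ∑ i ∈ range (n-2), ((1:ℝ)/2)^i := by
      rw [Finset.sum_Ico_eq_sum_range]
      have h1 : ∀ i ∈ range (n-2), ((1:ℝ)/2)^(n-1-(2+i)) = ((1:ℝ)/2)^((n-2)-1-i) := by
        intro i hi
        congr 1
        omega
      rw [Finset.sum_congr rfl h1, Finset.sum_range_reflect]
    have hgs : ∑ i ∈ range (n-2), ((1:ℝ)/2)^i = 2 - 2 * (1/2)^(n-2) := by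
      rw [geom_sum_eq (by norm_num : (1:ℝ)/2 ≠ 1)]
      ring
    have h2n : (2:ℝ)^(n-2) ≤ (n.factorial : ℝ) := by
      have h := two_pow_le_factorial_succ (n-2)
      have hle : (n-2+1).factorial ≤ n.factorial := Nat.factorial_le (by omega)
      exact_mod_cast le_trans h hle
    have hfin : (1:ℝ) ≤ (n.factorial : ℝ) * (1/2)^(n-2) := by
      rw [one_div, inv_pow, ← div_eq_mul_inv, le_div_iff₀ (by positivity)]
      linarith
    calc (1:ℝ) + ∑ k ∈ Ico 2 n, (n.choose k : ℝ) * ((k-1).factorial : ℝ)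
        ≤ 1 + ∑ k ∈ Ico 2 n, ((n.factorial : ℝ)/2) * (1/2)^(n-1-k) :=
          add_le_add_right (Finset.sum_le_sum hstep) 1
      _ = 1 + ((n.factorial : ℝ)/2) * ∑ k ∈ Ico 2 n, ((1:ℝ)/2)^(n-1-k) := by
          rw [Finset.mul_sum]
      _ = 1 + ((n.factorial : ℝ)/2) * (2 - 2 * (1/2)^(n-2)) := by rw [hgeom, hgs]
      _ = 1 + (n.factorial : ℝ) - (n.factorial : ℝ) * (1/2)^(n-2) := by ring
      _ ≤ (n.factorial : ℝ) := by linarith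

lemma maxpow {lam : ℝ} (hlam : 0 < lam) {k m : ℕ} (h2 : 2 ≤ k) (hkm : k + 2 ≤ m) :
    lam * max (lam ^ (k/2)) lam ≤ max (lam ^ (m/2)) lam := by
  have hdiv : k/2 + 1 ≤ m/2 := by omega
  have h2m : 2 ≤ m/2 := by omega
  have h1k : 1 ≤ k/2 := by omega
  rcases le_or_gt 1 lam with h | h
  · have hmax : max (lam ^ (k/2)) lam = lam ^ (k/2) := by
      apply max_eq_left
      calc lam = lam ^ 1 := (pow_one lam).symm
      _ ≤ lam ^ (k/2) := pow_le_pow_right₀ h h1k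
    rw [hmax]
    have : lam * lam ^ (k/2) = lam ^ (k/2 + 1) := by rw [pow_succ]; ring
    rw [this]
    exact le_max_of_le_left (pow_le_pow_right₀ h hdiv)
  · have hmax : max (lam ^ (k/2)) lam = lam := by
      apply max_eq_right
      calc lam ^ (k/2) ≤ lam ^ 1 := pow_le_pow_of_le_one hlam.le h.le h1k
      _ = lam := pow_one lam
    rw [hmax]
    apply le_max_of_le_right
    nlinarith

lemma S_le {lam : ℝ} (hlam : 0 < lam) :
    ∀ m : ℕ, 2 ≤ m → S lam m ≤ ((m - 1).factorial : ℝ) * max (lam ^ (m / 2)) lam := by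
  intro m
  induction m using Nat.strong_induction_on with
  | _ m ih =>
    intro hm
    obtain ⟨n, rfl⟩ : ∃ n, m = n + 1 := ⟨m - 1, by omega⟩
    have hn : 1 ≤ n := by omega
    set M : ℝ := max (lam ^ ((n+1) / 2)) lam with hM
    have hlamM : lam ≤ M := le_max_right _ _
    have hM0 : 0 < M := lt_of_lt_of_le hlam hlamM
    have hterm : ∀ k ∈ range n, lam * ((n.choose k : ℝ) * S lam k)
        ≤ (if k = 0 then 1 else if k = 1 then 0
            else (n.choose k : ℝ) * ((k-1).factorial : ℝ)) * M := by
      intro k hk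
      rw [mem_range] at hk
      rcases Nat.lt_or_ge k 2 with hklt | hk2'
      · interval_cases k
        · simp only [if_pos rfl]
          rw [S_zero hlam]
          simpa using hlamM
        · rw [S_one hlam]
          simp
      · have hk2 : 2 ≤ k := hk2'
        have hkm : k < n + 1 := by omega
        have hSk := ih k hkm hk2
        rw [if_neg (by omega), if_neg (by omega)]
        have hc : (0:ℝ) ≤ (n.choose k : ℝ) := Nat.cast_nonneg _
        calc lam * ((n.choose k : ℝ) * S lam k)
            ≤ lam * ((n.choose k : ℝ) * (((k - 1).factorial : ℝ) * max (lam ^ (k / 2)) lam)) := by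
              apply mul_le_mul_of_nonneg_left _ hlam.le
              exact mul_le_mul_of_nonneg_left hSk hc
          _ = (n.choose k : ℝ) * ((k-1).factorial : ℝ) * (lam * max (lam ^ (k / 2)) lam) := by
              ring
          _ ≤ (n.choose k : ℝ) * ((k-1).factorial : ℝ) * M := by
              apply mul_le_mul_of_nonneg_left _ (by positivity)
              exact maxpow hlam hk2 (by omega)
    have hsum : ∑ k ∈ range n, (if k = 0 then (1:ℝ) else if k = 1 then 0
        else (n.choose k : ℝ) * ((k-1).factorial : ℝ)) ≤ (n.factorial : ℝ) := by
      rcases lt_or_ge n 2 with hn2 | hn2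
      · interval_cases n <;> simp
      · have hsplit : range n = Ico 0 n := by rw [Finset.range_eq_Ico]
        rw [hsplit, ← Finset.sum_Ico_consecutive _ (by omega : 0 ≤ 2) (by omega : 2 ≤ n)]
        have h01 : ∑ k ∈ Ico 0 2, (if k = 0 then (1:ℝ) else if k = 1 then 0
            else (n.choose k : ℝ) * ((k-1).factorial : ℝ)) = 1 := by
          rw [show Ico 0 2 = {0, 1} by rfl]
          simp
        rw [h01]
        have h2 : ∑ k ∈ Ico 2 n, (if k = 0 then (1:ℝ) else if k = 1 then 0
            else (n.choose k : ℝ) * ((k-1).factorial : ℝ))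
            = ∑ k ∈ Ico 2 n, (n.choose k : ℝ) * ((k-1).factorial : ℝ) := by
          refine Finset.sum_congr rfl (fun k hk => ?_)
          rw [mem_Ico] at hk
          rw [if_neg (by omega), if_neg (by omega)]
        rw [h2]
        exact key n
    calc S lam (n+1) = lam * ∑ k ∈ range n, (n.choose k : ℝ) * S lam k := S_rec hlam n
      _ = ∑ k ∈ range n, lam * ((n.choose k : ℝ) * S lam k) := by rw [Finset.mul_sum]
      _ ≤ ∑ k ∈ range n, (if k = 0 then (1:ℝ) else if k = 1 then 0
            else (n.choose k : ℝ) * ((k-1).factorial : ℝ)) * M :=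
          Finset.sum_le_sum hterm
      _ = (∑ k ∈ range n, (if k = 0 then (1:ℝ) else if k = 1 then 0
            else (n.choose k : ℝ) * ((k-1).factorial : ℝ))) * M := by
          rw [← Finset.sum_mul]
      _ ≤ (n.factorial : ℝ) * M := mul_le_mul_of_nonneg_right hsum hM0.le
      _ = ((n + 1 - 1).factorial : ℝ) * max (lam ^ ((n+1) / 2)) lam := by norm_num [hM]

end PoissonCM

open PoissonCM

/-- Central moments of a Poisson random variable:
`E[(W − λ)^m] ≤ (m − 1)! · max{λ^⌊m/2⌋, λ}` for all integers `m ≥ 2`. -/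
theorem poisson_central_moment_bound
    {Ω : Type*} [MeasurableSpace Ω] (μ : Measure Ω) [IsProbabilityMeasure μ]
    (lam : ℝ) (hlam : 0 < lam)
    (W : Ω → ℕ) (hmeas : Measurable W)
    (hpois : ∀ j : ℕ, μ {ω | W ω = j}
      = ENNReal.ofReal (Real.exp (-lam) * lam ^ j / (j.factorial : ℝ))) :
    ∀ m : ℕ, 2 ≤ m →
      (∫ ω, ((W ω : ℝ) - lam) ^ m ∂μ)
        ≤ ((m - 1).factorial : ℝ) * max (lam ^ (m / 2)) lam := by
  intro m hm
  set f : ℕ → ℝ := fun j => ((j:ℝ) - lam) ^ m with hf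
  have hfm : Measurable f := measurable_of_countable f
  set ν : Measure ℕ := μ.map W with hν
  have hνj : ∀ j : ℕ, ν {j} = ENNReal.ofReal (p lam j) := by
    intro j
    rw [hν, Measure.map_apply hmeas (measurableSet_singleton j)]
    have : W ⁻¹' {j} = {ω | W ω = j} := by ext ω; simp
    rw [this, hpois j]
    rfl
  have habs : Summable (fun j : ℕ => |f j| * p lam j) := by
    refine summable_aux hlam (M := m) (C := (1+lam)^m) (fun j => ?_)
    rw [abs_abs]
    have hfj : f j = ((j:ℝ) + 0 - lam) ^ m := by rw [hf]; norm_num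
    rw [hfj]
    exact abs_shift_pow_le hlam (a := 0) le_rfl zero_le_one m j
  have hint : Integrable f ν := by
    refine ⟨hfm.aestronglyMeasurable, ?_⟩
    rw [HasFiniteIntegral]
    rw [lintegral_countable' (fun a => ‖f a‖ₑ)]
    have heq : ∀ j : ℕ, (‖f j‖₊ : ENNReal) * ν {j} = ENNReal.ofReal (|f j| * p lam j) := by
      intro j
      rw [hνj j, ENNReal.ofReal_mul (abs_nonneg _)]
      congr 1
      rw [← Real.norm_eq_abs]
      exact (ofReal_norm (f j)).symm
    calc ∑' j : ℕ, (‖f j‖₊ : ENNReal) * ν {j}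
        = ∑' j : ℕ, ENNReal.ofReal (|f j| * p lam j) := by
          congr 1; funext j; exact heq j
      _ = ENNReal.ofReal (∑' j : ℕ, |f j| * p lam j) := by
          rw [ENNReal.ofReal_tsum_of_nonneg (fun j => mul_nonneg (abs_nonneg _) (p_pos hlam j).le) habs]
      _ < ⊤ := ENNReal.ofReal_lt_top
  have hmap : (∫ ω, ((W ω : ℝ) - lam) ^ m ∂μ) = ∫ x, f x ∂ν := by
    rw [hν, integral_map hmeas.aemeasurable hfm.aestronglyMeasurable]
  have hcount : (∫ x, f x ∂ν) = ∑' j : ℕ, (ν {j}).toReal • f j := integral_countable' hint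
  have hS : (∑' j : ℕ, (ν {j}).toReal • f j) = S lam m := by
    unfold S
    congr 1
    funext j
    rw [hνj j, ENNReal.toReal_ofReal (p_pos hlam j).le, smul_eq_mul]
    ring
  rw [hmap, hcount, hS]
  exact S_le hlam m hm
end

section
/- Let c_1, …, c_k be strictly positive real constants and define f(Q) = Σ_{i=1}^k c_i · Σ_{j=1}^k Q_{ij}^4 for Q ∈ O(k). Then max_{Q ∈ O(k)} f(Q) = Σ_{i=1}^k c_i, and the set of maximizers of f over O(k) is exactly the set of k × k signed permutation matrices. -/
open Matrix

/-- A signed permutation matrix: exactly one nonzero entry in each row and each column,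
each nonzero entry equal to `+1` or `−1`. -/
def IsSignedPermMatrix {k : ℕ} (P : Matrix (Fin k) (Fin k) ℝ) : Prop :=
  (∀ i, ∃! j, P i j ≠ 0) ∧ (∀ j, ∃! i, P i j ≠ 0) ∧
    ∀ i j, P i j = 0 ∨ P i j = 1 ∨ P i j = -1

lemma aux_row_sq {k : ℕ} {Q : Matrix (Fin k) (Fin k) ℝ} (hQ : Qᵀ * Q = 1) (i : Fin k) :
    ∑ j, Q i j ^ 2 = 1 := by
  have hQQ : Q * Qᵀ = 1 := mul_eq_one_comm.mp hQ
  have := congrFun (congrFun hQQ i) i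
  simpa [Matrix.mul_apply, Matrix.one_apply, sq] using this

lemma aux_col_sq {k : ℕ} {Q : Matrix (Fin k) (Fin k) ℝ} (hQ : Qᵀ * Q = 1) (j : Fin k) :
    ∑ i, Q i j ^ 2 = 1 := by
  have := congrFun (congrFun hQ j) j
  simpa [Matrix.mul_apply, Matrix.one_apply, sq] using this

lemma aux_entry_sq_le {k : ℕ} {Q : Matrix (Fin k) (Fin k) ℝ} (hQ : Qᵀ * Q = 1)
    (i j : Fin k) : Q i j ^ 2 ≤ 1 := by
  have h := aux_row_sq hQ i
  calc Q i j ^ 2 ≤ ∑ j', Q i j' ^ 2 :=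
        Finset.single_le_sum (f := fun j' => Q i j' ^ 2) (fun j' _ => sq_nonneg _)
          (Finset.mem_univ j)
    _ = 1 := h

lemma aux_sum4_le {k : ℕ} {Q : Matrix (Fin k) (Fin k) ℝ} (hQ : Qᵀ * Q = 1) (i : Fin k) :
    ∑ j, Q i j ^ 4 ≤ 1 := by
  calc ∑ j, Q i j ^ 4 ≤ ∑ j, Q i j ^ 2 := by
        refine Finset.sum_le_sum fun j _ => ?_
        have := aux_entry_sq_le hQ i j
        nlinarith [sq_nonneg (Q i j)]
    _ = 1 := aux_row_sq hQ i

/-- unique nonzero from sum-of-squares 1 and entries in {0,±1} -/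
lemma aux_unique {k : ℕ} (f : Fin k → ℝ)
    (hsum : ∑ j, f j ^ 2 = 1) (hent : ∀ j, f j = 0 ∨ f j = 1 ∨ f j = -1) :
    ∃! j, f j ≠ 0 := by
  have hne : ∃ j, f j ≠ 0 := by
    by_contra h
    push_neg at h
    simp [h] at hsum
  obtain ⟨j0, hj0⟩ := hne
  refine ⟨j0, hj0, fun j1 hj1 => ?_⟩
  by_contra hne'
  have h0 : f j0 ^ 2 = 1 := by rcases hent j0 with h | h | h <;> simp [h] at hj0 ⊢
  have h1 : f j1 ^ 2 = 1 := by rcases hent j1 with h | h | h <;> simp [h] at hj1 ⊢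
  have hpair : ∑ j ∈ ({j1, j0} : Finset (Fin k)), f j ^ 2 = 2 := by
    rw [Finset.sum_pair hne', h0, h1]; norm_num
  have hle : ∑ j ∈ ({j1, j0} : Finset (Fin k)), f j ^ 2 ≤ ∑ j, f j ^ 2 :=
    Finset.sum_le_sum_of_subset_of_nonneg (Finset.subset_univ _)
      (fun _ _ _ => sq_nonneg _)
  rw [hpair, hsum] at hle
  linarith

/-- For positive weights `cᵢ`, the function `f(Q) = Σᵢ cᵢ Σⱼ Q_{ij}⁴` attains its maximum
`Σᵢ cᵢ` over the orthogonal group exactly at the signed permutation matrices. -/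
theorem varimax_population_maximizers {k : ℕ}
    (c : Fin k → ℝ) (hc : ∀ i, 0 < c i) :
    IsGreatest
        ((fun Q : Matrix (Fin k) (Fin k) ℝ => ∑ i, c i * ∑ j, (Q i j) ^ 4) ''
          {Q | Qᵀ * Q = 1})
        (∑ i, c i) ∧
      {Q : Matrix (Fin k) (Fin k) ℝ |
          Qᵀ * Q = 1 ∧ (∑ i, c i * ∑ j, (Q i j) ^ 4) = ∑ i, c i}
        = {Q : Matrix (Fin k) (Fin k) ℝ | IsSignedPermMatrix Q} := by
  constructor
  · constructor
    · refine ⟨1, by simp, ?_⟩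
      have : ∀ i : Fin k, ∑ j, ((1 : Matrix (Fin k) (Fin k) ℝ) i j) ^ 4 = 1 := by
        intro i
        simp [Matrix.one_apply]
      simp only [this, mul_one]
    · rintro x ⟨Q, hQ, rfl⟩
      simp only [Set.mem_setOf_eq] at hQ
      calc ∑ i, c i * ∑ j, Q i j ^ 4 ≤ ∑ i, c i * 1 :=
            Finset.sum_le_sum fun i _ =>
              mul_le_mul_of_nonneg_left (aux_sum4_le hQ i) (hc i).le
        _ = ∑ i, c i := by simp
  · ext Q
    simp only [Set.mem_setOf_eq]
    constructor
    · rintro ⟨hQ, hsum⟩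
      -- each row's 4th-power sum equals 1
      have h1 : ∀ i, ∑ j, Q i j ^ 4 = 1 := by
        have hle : ∀ i ∈ Finset.univ, c i * ∑ j, Q i j ^ 4 ≤ c i * 1 := fun i _ =>
          mul_le_mul_of_nonneg_left (aux_sum4_le hQ i) (hc i).le
        have hsum' : ∑ i, c i * ∑ j, Q i j ^ 4 = ∑ i, c i * 1 := by simpa using hsum
        have := (Finset.sum_eq_sum_iff_of_le hle).mp hsum'
        intro i
        have := this i (Finset.mem_univ i)
        have hc' := (hc i).ne'
        have := mul_left_cancel₀ hc' this
        linarith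
      have hent : ∀ i j, Q i j = 0 ∨ Q i j = 1 ∨ Q i j = -1 := by
        intro i j
        have hz : ∑ j', (Q i j' ^ 2 - Q i j' ^ 4) = 0 := by
          rw [Finset.sum_sub_distrib, aux_row_sq hQ i, h1 i]; ring
        have hnn : ∀ j' ∈ Finset.univ, 0 ≤ Q i j' ^ 2 - Q i j' ^ 4 := by
          intro j' _
          have := aux_entry_sq_le hQ i j'
          nlinarith [sq_nonneg (Q i j')]
        have heq := (Finset.sum_eq_zero_iff_of_nonneg hnn).mp hz j (Finset.mem_univ j)
        have h24 : Q i j ^ 2 = Q i j ^ 4 := by linarith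
        rcases eq_or_ne (Q i j) 0 with h | h
        · exact Or.inl h
        · right
          have hsq : Q i j ^ 2 = 1 := by
            have h2 : Q i j ^ 2 ≠ 0 := pow_ne_zero _ h
            have hfac : Q i j ^ 2 * (Q i j ^ 2 - 1) = 0 := by linear_combination -h24
            rcases mul_eq_zero.mp hfac with h' | h'
            · exact absurd h' h2
            · linarith
          have : (Q i j - 1) * (Q i j + 1) = 0 := by nlinarith
          rcases mul_eq_zero.mp this with h' | h'
          · exact Or.inl (by linarith)
          · exact Or.inr (by linarith)
      refine ⟨fun i => aux_unique _ (aux_row_sq hQ i) (hent i),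
        fun j => aux_unique _ (aux_col_sq hQ j) (fun i => hent i j), hent⟩
    · rintro ⟨hrow, hcol, hent⟩
      have hO : Qᵀ * Q = 1 := by
        ext j j'
        rw [Matrix.mul_apply]
        simp only [Matrix.transpose_apply]
        rcases eq_or_ne j j' with rfl | hne
        · obtain ⟨i0, hi0, hiu⟩ := hcol j
          rw [Finset.sum_eq_single i0, Matrix.one_apply_eq]
          · rcases hent i0 j with h | h | h
            · exact absurd h hi0
            · rw [h]; ring
            · rw [h]; ring
          · intro i _ hne'
            rcases eq_or_ne (Q i j) 0 with h | h
            · rw [h]; ring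
            · exact absurd (hiu i h) hne'
          · simp
        · rw [Matrix.one_apply_ne hne, Finset.sum_eq_zero]
          intro i _
          obtain ⟨j0, hj0, hju⟩ := hrow i
          rcases eq_or_ne (Q i j) 0 with h | h
          · rw [h]; ring
          · rcases eq_or_ne (Q i j') 0 with h' | h'
            · rw [h']; ring
            · exact absurd ((hju j h).trans (hju j' h').symm) hne
      refine ⟨hO, ?_⟩
      have : ∀ i, ∑ j, Q i j ^ 4 = 1 := by
        intro i
        obtain ⟨j0, hj0, hju⟩ := hrow i
        rw [Finset.sum_eq_single j0]
        · rcases hent i j0 with h | h | h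
          · exact absurd h hj0
          · rw [h]; ring
          · rw [h]; ring
        · intro j _ hne
          rcases eq_or_ne (Q i j) 0 with h | h
          · rw [h]; ring
          · exact absurd (hju j h) hne
        · simp
      simp only [this, mul_one]
end
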